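/- arXiv:2009.06583 — 14 statements merged into one kernel-verified Lean document; each statement's English description precedes it below -/
import Mathlib

section
/- If θ is a rational number, cos(πθ) ≠ 0, and tan(πθ) is rational, then tan(πθ) ∈ {0, 1, -1}. -/
/-!
If `t = tan (π θ)` is rational, then `cos (2 π θ) = (1 - t²) / (1 + t²)` is a rational value
of the cosine at a rational multiple of `π`, so by Niven's theorem it is one of `0, ±1/2, ±1`.
Solving for `t²`: the value `-1` is impossible, `±1/2` would make `3` or `1/3` the square of a
rational, and `0`, `1` give `t = ±1`, `t = 0`.
-/

open Real

theorem Real.cos_two_mul_eq_one_sub_tan_sq_div_one_add_tan_sq {x : ℝ} (hx : cos x ≠ 0) :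
    cos (2 * x) = (1 - tan x ^ 2) / (1 + tan x ^ 2) := by
  rw [cos_two_mul, ← inv_one_add_tan_sq hx]
  field_simp
  ring

theorem Rat.cast_mem_of_one_sub_sq_div_one_add_sq_mem {q : ℚ}
    (h : ((1 - q ^ 2) / (1 + q ^ 2) : ℝ) ∈ ({-1, -1 / 2, 0, 1 / 2, 1} : Set ℝ)) :
    (q : ℝ) ∈ ({0, 1, -1} : Set ℝ) := by
  have hden : (1 + q ^ 2 : ℝ) ≠ 0 := by positivity
  simp only [Set.mem_insert_iff, Set.mem_singleton_iff, div_eq_iff hden] at h ⊢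
  rcases h with h | h | h | h | h
  · linarith
  · have hsq : ((3 : ℚ) : ℝ) = q * q := by push_cast; linear_combination 2 * h
    have : IsSquare (3 : ℚ) := ⟨q, by exact_mod_cast hsq⟩
    norm_num at this
  · have : ((q : ℝ) - 1) * (q + 1) = 0 := by linear_combination -h
    rcases mul_eq_zero.mp this with h1 | h1
    · right; left; linarith
    · right; right; linarith
  · have hsq : ((1 / 3 : ℚ) : ℝ) = q * q := by push_cast; linear_combination (2 / 3) * h
    have : IsSquare (1 / 3 : ℚ) := ⟨q, by exact_mod_cast hsq⟩
    norm_num at this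
  · left
    exact pow_eq_zero_iff two_ne_zero |>.mp (by linarith)

theorem rational_tan_values (θ : ℚ) (hc : Real.cos (Real.pi * θ) ≠ 0)
    (h : ∃ q : ℚ, Real.tan (Real.pi * θ) = q) :
    Real.tan (Real.pi * θ) ∈ ({0, 1, -1} : Set ℝ) := by
  obtain ⟨q, hq⟩ := h
  have hcos : cos (2 * (π * θ)) = ((1 - q ^ 2) / (1 + q ^ 2) : ℝ) := by
    rw [cos_two_mul_eq_one_sub_tan_sq_div_one_add_tan_sq hc, hq]
  have hniven := niven (θ := 2 * (π * θ)) ⟨2 * θ, by push_cast; ring⟩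
    ⟨(1 - q ^ 2) / (1 + q ^ 2), by rw [hcos]; push_cast; rfl⟩
  rw [hq]
  exact Rat.cast_mem_of_one_sub_sq_div_one_add_sq_mem (hcos ▸ hniven)
end

section
/- Let N ≥ 3 be an integer and α a positive rational number such that α^(k/N) is irrational for every k with 1 ≤ k ≤ N − 1. Then for every positive integer m, the real N-th root α^(1/N) does not lie in the m-th cyclotomic field ℚ(ζ_m). -/
/-!
A real number in a cyclotomic field generates an abelian, hence Galois, extension of `ℚ`
inside `ℝ`, so all conjugates of `β = α^(1/N)` are real. They are roots of `X^N - α`, and the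
only real ones are `±β`; so the minimal polynomial of `β` has degree `d ≤ 2`, and its constant
coefficient is `±β^d`. Hence `α^(d/N) = β^d` is rational for some `d ∈ {1, 2}`.
-/

open Polynomial IntermediateField

theorem Multiset.card_le_two_of_nodup_of_abs_eq {α : Type*} [AddGroup α] [LinearOrder α]
    {s : Multiset α} {c : α} (hs : s.Nodup) (habs : ∀ r ∈ s, |r| = |c|) :
    Multiset.card s ≤ 2 := by
  have hsub : s.toFinset ⊆ {c, -c} := fun r hr ↦ by
    simpa using abs_eq_abs.1 (habs r (Multiset.mem_toFinset.1 hr))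
  rw [← Multiset.toFinset_card_of_nodup hs]
  exact (Finset.card_le_card hsub).trans Finset.card_le_two

section LinearOrderedField

variable {K : Type*} [Field K] [LinearOrder K] [IsStrictOrderedRing K]

theorem Multiset.abs_prod_of_abs_eq {s : Multiset K} {c : K} (habs : ∀ r ∈ s, |r| = c) :
    |s.prod| = c ^ Multiset.card s := by
  have : s.map abs = Multiset.replicate (Multiset.card s) c := by
    rw [← Multiset.card_map abs s, Multiset.eq_replicate_card]
    simpa using habs
  calc |s.prod| = (s.map abs).prod := map_multiset_prod (absHom (α := K)) s
    _ = c ^ Multiset.card s := by rw [this, Multiset.prod_replicate]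

theorem abs_eq_abs_of_aeval_minpoly_eq_zero {β r : K} {N : ℕ} {q : ℚ} (hN : N ≠ 0)
    (hβN : β ^ N = q) (hr : aeval r (minpoly ℚ β) = 0) : |r| = |β| := by
  obtain ⟨p, hp⟩ : minpoly ℚ β ∣ X ^ N - C q := minpoly.dvd ℚ β (by simp [hβN])
  have hrN : r ^ N = β ^ N := by
    have := congrArg (aeval r) hp
    simp only [map_sub, map_pow, aeval_X, aeval_C, eq_ratCast, map_mul, hr, zero_mul,
      sub_eq_zero] at this
    rw [this, hβN]
  rw [← pow_left_inj₀ (abs_nonneg r) (abs_nonneg β) hN, ← abs_pow, ← abs_pow, hrN]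

theorem exists_abs_pow_eq_ratCast_of_minpoly_splits {β : K} {N : ℕ} {q : ℚ} (hN : N ≠ 0)
    (hβN : β ^ N = q) (hsplit : ((minpoly ℚ β).map (algebraMap ℚ K)).Splits) :
    ∃ d, 0 < d ∧ d ≤ 2 ∧ ∃ r : ℚ, |β| ^ d = r := by
  have hint : IsIntegral ℚ β := ⟨X ^ N - C q, monic_X_pow_sub_C q hN, by simp [hβN]⟩
  set g := minpoly ℚ β
  set R := (g.map (algebraMap ℚ K)).roots
  have hR : ∀ r ∈ R, |r| = |β| := fun r hr ↦
    abs_eq_abs_of_aeval_minpoly_eq_zero hN hβN (by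
      rwa [mem_roots (map_ne_zero (minpoly.ne_zero hint)), IsRoot, eval_map_algebraMap] at hr)
  have hcard : Multiset.card R = g.natDegree := by
    rw [← hsplit.natDegree_eq_card_roots, natDegree_map]
  have hcoeff : |(g.coeff 0 : K)| = |β| ^ g.natDegree := by
    have := hsplit.coeff_zero_eq_prod_roots_of_monic ((minpoly.monic hint).map _)
    rw [coeff_map, eq_ratCast, natDegree_map] at this
    rw [this, abs_mul, abs_pow, abs_neg, abs_one, one_pow, one_mul,
      Multiset.abs_prod_of_abs_eq hR, hcard]
  refine ⟨g.natDegree, minpoly.natDegree_pos hint, ?_, |g.coeff 0|, by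
    push_cast; exact hcoeff.symm⟩
  rw [← hcard]
  exact Multiset.card_le_two_of_nodup_of_abs_eq
    (nodup_roots ((minpoly.irreducible hint).separable.map)) hR

end LinearOrderedField

theorem minpoly_map_splits_of_algebraMap_mem {K L M : Type*} [Field K] [Field L] [Field M]
    [Algebra K L] [Algebra K M] [Algebra L M] [IsScalarTower K L M]
    (E : IntermediateField K M) [IsAbelianGalois K E] {x : L} (hx : algebraMap L M x ∈ E) :
    ((minpoly K x).map (algebraMap K L)).Splits := by
  let φ := IsScalarTower.toAlgHom K L M
  have hle : K⟮x⟯.map φ ≤ E := by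
    rw [IntermediateField.map_le_iff_le_comap, adjoin_simple_le_iff]
    exact hx
  have : IsAbelianGalois K K⟮x⟯ :=
    .of_algHom ((inclusion hle).comp (equivMap K⟮x⟯ φ).toAlgHom)
  have hsplit := (inferInstance : Normal K K⟮x⟯).splits (AdjoinSimple.gen K x)
  rw [minpoly_gen] at hsplit
  exact hsplit.of_isScalarTower L

theorem IsPrimitiveRoot.isAbelianGalois_adjoin {K L : Type*} [Field K] [Field L] [Algebra K L]
    {ζ : L} {n : ℕ} [NeZero n] (hζ : IsPrimitiveRoot ζ n) : IsAbelianGalois K K⟮ζ⟯ := by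
  have : IsCyclotomicExtension {n} K K⟮ζ⟯ := by
    change IsCyclotomicExtension {n} K K⟮ζ⟯.toSubalgebra
    rw [adjoin_simple_toSubalgebra_of_isAlgebraic
      ((hζ.isIntegral (NeZero.pos n)).tower_top (A := K)).isAlgebraic]
    exact hζ.adjoin_isCyclotomicExtension K
  exact IsCyclotomicExtension.isAbelianGalois {n} K _

theorem nth_root_not_in_cyclotomic (N : ℕ) (hN : 3 ≤ N) (α : ℚ) (hα : 0 < α)
    (hirr : ∀ k : ℕ, 1 ≤ k → k ≤ N - 1 → Irrational ((α : ℝ) ^ ((k : ℝ) / (N : ℝ))))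
    (m : ℕ) (hm : 0 < m) (ζ : ℂ) (hζ : IsPrimitiveRoot ζ m) :
    (((α : ℝ) ^ ((1 : ℝ) / (N : ℝ)) : ℝ) : ℂ) ∉
      IntermediateField.adjoin ℚ ({ζ} : Set ℂ) := by
  intro hmem
  have hαpos : (0 : ℝ) < α := Rat.cast_pos.2 hα
  have hN0 : N ≠ 0 := by omega
  have hβN : ((α : ℝ) ^ ((1 : ℝ) / N)) ^ N = (α : ℝ) := by
    rw [one_div]
    exact Real.rpow_inv_natCast_pow hαpos.le hN0
  have : NeZero m := ⟨hm.ne'⟩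
  have := hζ.isAbelianGalois_adjoin (K := ℚ)
  obtain ⟨d, hd0, hd2, r, hr⟩ := exists_abs_pow_eq_ratCast_of_minpoly_splits hN0 hβN
    (minpoly_map_splits_of_algebraMap_mem _ hmem)
  refine hirr d hd0 (by omega) ⟨r, ?_⟩
  rw [← hr, abs_of_pos (Real.rpow_pos_of_pos hαpos _), ← Real.rpow_natCast,
    ← Real.rpow_mul hαpos.le, one_div_mul_eq_div]
end

section
/- Let N ≥ 3 be an integer. There is no rational number θ such that cos(πθ)^k is irrational for every k with 1 ≤ k ≤ N − 1 and cos(πθ)^N is rational. -/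
/-!
Let `c = cos (π θ)` and `n` the denominator of `θ`. Then `T_n(c) = ±1`, and every root `z` of
`T_n² - 1` in `ℂ` is real, since `z = cos w` with `sin (n w) = 0`. So every conjugate `z` of `c`
over `ℚ` is a real number with `z ^ N = c ^ N`, i.e. `z = ± c`. As the minimal polynomial of `c` is
separable, its roots are `{c}` or `{c, -c}`, and its constant coefficient shows `c² ∈ ℚ`.
-/

open Polynomial Polynomial.Chebyshev

theorem Polynomial.Chebyshev.sq_eval_T_complex_cos_eq_one_iff (n : ℤ) (w : ℂ) :
    (T ℂ n).eval (Complex.cos w) ^ 2 = 1 ↔ Complex.sin (n * w) = 0 := by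
  have := Complex.sin_sq_add_cos_sq (n * w)
  rw [T_complex_cos, ← pow_eq_zero_iff two_ne_zero]
  constructor <;> intro h <;> linear_combination this - h

theorem Polynomial.Chebyshev.exists_ofReal_eq_of_sq_eval_T_eq_one {n : ℤ} (hn : n ≠ 0) {z : ℂ}
    (hz : (T ℂ n).eval z ^ 2 = 1) : ∃ r : ℝ, (r : ℂ) = z := by
  obtain ⟨w, rfl⟩ := Complex.cos_surjective z
  obtain ⟨k, hk⟩ := Complex.sin_eq_zero_iff.mp ((sq_eval_T_complex_cos_eq_one_iff n w).mp hz)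
  refine ⟨Real.cos (k * Real.pi / n), ?_⟩
  push_cast
  rw [← hk]
  field_simp

theorem Polynomial.Chebyshev.sq_eval_T_den_cos_pi_mul_rat (θ : ℚ) :
    (T ℂ θ.den).eval (Real.cos (Real.pi * θ) : ℂ) ^ 2 = 1 := by
  have hden : ((θ.den : ℤ) : ℂ) * ((Real.pi * θ : ℝ) : ℂ) = θ.num * Real.pi := by
    have h : (θ.den : ℂ) * θ = θ.num := by exact_mod_cast Rat.den_mul_eq_num θ
    push_cast
    linear_combination Real.pi * h
  rw [Complex.ofReal_cos, sq_eval_T_complex_cos_eq_one_iff, hden, Complex.sin_int_mul_pi]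

theorem aeval_eq_zero_of_mem_aroots_minpoly {K L : Type*} [Field K] [Field L] [Algebra K L]
    {x z : L} {f : K[X]} (hz : z ∈ (minpoly K x).aroots L) (hf : aeval x f = 0) :
    aeval z f = 0 :=
  aeval_eq_zero_of_dvd_aeval_eq_zero (minpoly.dvd K x hf) (mem_aroots.mp hz).2

theorem exists_algebraMap_eq_sq_of_aroots_minpoly_subset {K L : Type*} [Field K] [Field L]
    [IsAlgClosed L] [Algebra K L] {x : L} (hx : IsSeparable K x)
    (h : ∀ z ∈ (minpoly K x).aroots L, z = x ∨ z = -x) :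
    ∃ a : K, algebraMap K L a = x ^ 2 := by
  have hint : IsIntegral K x := hx.isIntegral
  have hsplits := IsAlgClosed.splits ((minpoly K x).map (algebraMap K L))
  have hcoeff := hsplits.coeff_zero_eq_prod_roots_of_monic ((minpoly.monic hint).map _)
  rw [coeff_map, hsplits.natDegree_eq_card_roots, ← aroots_def] at hcoeff
  set s := (minpoly K x).aroots L
  have hs : s.Nodup := nodup_roots (Polynomial.Separable.map hx)
  have hxs : x ∈ s := mem_aroots.mpr ⟨minpoly.ne_zero hint, minpoly.aeval K x⟩
  by_cases hneg : -x ∈ s ∧ x ≠ -x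
  · have hs_eq : s = {x, -x} := by
      rw [hs.ext (by simpa using hneg.2)]
      intro z
      simp only [Multiset.insert_eq_cons, Multiset.mem_cons, Multiset.mem_singleton]
      exact ⟨h z, by rintro (rfl | rfl) <;> [exact hxs; exact hneg.1]⟩
    refine ⟨-(minpoly K x).coeff 0, ?_⟩
    rw [map_neg, hcoeff, hs_eq]
    simp [sq]
  · have hs_eq : s = {x} := by
      rw [hs.ext (Multiset.nodup_singleton x)]
      intro z
      rw [Multiset.mem_singleton]
      refine ⟨fun hz => (h z hz).elim id fun hzx => ?_, fun hzx => hzx ▸ hxs⟩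
      rw [hzx, ← not_and_not_right.mp hneg (hzx ▸ hz)]
    refine ⟨(minpoly K x).coeff 0 ^ 2, ?_⟩
    rw [map_pow, hcoeff, hs_eq]
    simp

theorem no_cos_pow_rational (N : ℕ) (hN : 3 ≤ N) :
    ¬ ∃ θ : ℚ, (∀ k : ℕ, 1 ≤ k → k ≤ N - 1 → Irrational (Real.cos (Real.pi * θ) ^ k)) ∧
      (∃ q : ℚ, Real.cos (Real.pi * θ) ^ N = q) := by
  rintro ⟨θ, hirr, q, hq⟩
  set c := Real.cos (Real.pi * θ)
  have hpow : aeval (c : ℂ) (X ^ N - C q) = 0 := by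
    simp [← Complex.ofReal_pow, hq]
  have hcheb : aeval (c : ℂ) (T ℚ θ.den ^ 2 - 1) = 0 := by
    rw [map_sub, map_pow, aeval_T, sq_eval_T_den_cos_pi_mul_rat, map_one, sub_self]
  have hsep : IsSeparable ℚ (c : ℂ) :=
    (minpoly.irreducible ⟨_, monic_X_pow_sub_C q (by omega), hpow⟩).separable
  have hconj : ∀ z ∈ (minpoly ℚ (c : ℂ)).aroots ℂ, z = c ∨ z = -c := by
    intro z hz
    obtain ⟨r, rfl⟩ := exists_ofReal_eq_of_sq_eval_T_eq_one (Int.natCast_ne_zero.mpr θ.den_nz)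
      (by simpa [aeval_T, sub_eq_zero] using aeval_eq_zero_of_mem_aroots_minpoly hz hcheb)
    have hrN : (r : ℂ) ^ N = q := by
      simpa [sub_eq_zero] using aeval_eq_zero_of_mem_aroots_minpoly hz hpow
    rcases (pow_eq_pow_iff_of_ne_zero (by omega)).mp (hq ▸ (mod_cast hrN : r ^ N = q))
      with h | ⟨h, -⟩ <;> simp [h]
  obtain ⟨a, ha⟩ := exists_algebraMap_eq_sq_of_aroots_minpoly_subset hsep hconj
  exact hirr 2 (by omega) (by omega) ⟨a, by rw [eq_ratCast] at ha; exact_mod_cast ha⟩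
end

section
/- Let N ≥ 3 be an integer. There is no rational number θ with cos(πθ) ≠ 0 such that tan(πθ)^k is irrational for every k with 1 ≤ k ≤ N − 1 and tan(πθ)^N is rational. -/
/-!
Put `t = tan(πθ)` and `z = exp(2πiθ)`, a root of unity with `z - 1 = i t (z + 1)`. Every
`ℚ`-embedding `ψ` of an algebraic extension containing `t`, `z` and `i` into `ℂ` keeps this
relation with `ψ z` on the unit circle and `ψ i = ±i`, which forces `ψ t` to be real. Since
`(ψ t)^N = t^N ∈ ℚ`, we get `ψ t = ±t`, so `t²` is fixed by every embedding and hence rational.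
As `2 ≤ N - 1`, this contradicts the assumed irrationality of `tan(πθ)^2`.
-/

open Complex ComplexConjugate Polynomial

theorem mem_range_algebraMap_of_forall_algHom_apply_eq {F K A : Type*} [Field F] [Field K]
    [Field A] [Algebra F K] [Algebra F A] [IsAlgClosed A] [Algebra.IsSeparable F K]
    {x : K} {c : A} (h : ∀ ψ : K →ₐ[F] A, ψ x = c) : x ∈ (algebraMap F K).range := by
  have hroots : (minpoly F x).rootSet A ⊆ {c} := by
    rw [← Algebra.IsAlgebraic.range_eval_eq_rootSet_minpoly]
    rintro _ ⟨ψ, rfl⟩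
    exact h ψ
  have hdeg : (minpoly F x).natDegree ≤ 1 := by
    rw [← card_rootSet_eq_natDegree (Algebra.IsSeparable.isSeparable F x)
      (IsAlgClosed.splits ((minpoly F x).map (algebraMap F A)))]
    simpa using Set.card_le_card hroots
  rw [← minpoly.natDegree_eq_one_iff]
  exact le_antisymm hdeg (minpoly.natDegree_pos (Algebra.IsIntegral.isIntegral x))

theorem mem_algebraicClosure_of_pow_eq_algebraMap {F E : Type*} [Field F] [Field E]
    [Algebra F E] {x : E} {n : ℕ} (hn : n ≠ 0) {a : F} (h : x ^ n = algebraMap F E a) :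
    x ∈ algebraicClosure F E :=
  IsIntegral.of_pow (Nat.pos_of_ne_zero hn) (h ▸ isIntegral_algebraMap)

namespace Complex

theorem conj_eq_self_of_sub_one_eq_mul_add_one {w j r : ℂ} (hw : ‖w‖ = 1) (hj : j ^ 2 = -1)
    (h : w - 1 = j * r * (w + 1)) : conj r = r := by
  have hw0 : w ≠ 0 := norm_ne_zero_iff.mp (by simp [hw])
  have hw1 : w + 1 ≠ 0 := by
    intro h0
    rw [eq_neg_of_add_eq_zero_left h0] at h
    norm_num at h
  have hj0 : j ≠ 0 := by rintro rfl; norm_num at hj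
  have hj_norm : ‖j‖ = 1 := by
    have : ‖j‖ ^ 2 = 1 := by rw [← norm_pow, hj, norm_neg, norm_one]
    exact (pow_eq_one_iff_of_nonneg (norm_nonneg j) two_ne_zero).mp this
  have hconj_w : conj w = w⁻¹ := (inv_eq_conj hw).symm
  have hconj_j : conj j = -j := by
    rw [← inv_eq_conj hj_norm]
    exact inv_eq_of_mul_eq_one_right (by linear_combination -hj)
  have h' := congrArg conj h
  simp only [map_sub, map_mul, map_add, map_one, hconj_w, hconj_j] at h'
  field_simp at h'
  refine (mul_right_inj' (mul_ne_zero hj0 hw1)).mp ?_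
  linear_combination h' + h

theorem sq_eq_sq_of_conj_eq_self_of_pow_eq_pow {r : ℂ} {t : ℝ} {N : ℕ} (hN : N ≠ 0)
    (hr : conj r = r) (h : r ^ N = (t : ℂ) ^ N) : r ^ 2 = (t : ℂ) ^ 2 := by
  obtain ⟨s, rfl⟩ := conj_eq_iff_real.mp hr
  norm_cast at h ⊢
  rcases (pow_eq_pow_iff_of_ne_zero hN).mp h with rfl | ⟨rfl, -⟩ <;> ring

theorem exp_two_mul_mul_I_sub_one_eq_I_mul_tan_mul {x : ℂ} (hx : cos x ≠ 0) :
    exp (2 * x * I) - 1 = I * tan x * (exp (2 * x * I) + 1) := by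
  rw [tan_eq_sin_div_cos, exp_mul_I, cos_two_mul, sin_two_mul]
  field_simp
  linear_combination (2 * cos x) * sin_sq_add_cos_sq x - 2 * cos x * sin x ^ 2 * I_sq

theorem exp_two_pi_mul_rat_mul_I_pow_den (θ : ℚ) :
    exp (2 * (Real.pi * θ : ℝ) * I) ^ θ.den = 1 := by
  rw [← exp_nat_mul, ← exp_int_mul_two_pi_mul_I θ.num]
  congr 1
  have hden : (θ : ℂ) * θ.den = θ.num := by exact_mod_cast Rat.mul_den_eq_num θ
  push_cast
  linear_combination (2 * Real.pi * I) * hden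

end Complex

theorem sq_mem_range_ratCast_of_sub_one_eq_I_mul_mul_add_one {t : ℝ} {z : ℂ} {n N : ℕ}
    (hn : n ≠ 0) (hN : N ≠ 0) (hz : z ^ n = 1) (hrel : z - 1 = I * t * (z + 1)) {q : ℚ}
    (htq : t ^ N = q) : t ^ 2 ∈ Set.range ((↑) : ℚ → ℝ) := by
  have htqC : (t : ℂ) ^ N = algebraMap ℚ ℂ q := by rw [eq_ratCast]; exact_mod_cast htq
  have hzC : z ^ n = algebraMap ℚ ℂ 1 := by rw [map_one, hz]
  have hIC : I ^ 2 = algebraMap ℚ ℂ (-1) := by rw [map_neg, map_one, I_sq]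
  let T : algebraicClosure ℚ ℂ := ⟨t, mem_algebraicClosure_of_pow_eq_algebraMap hN htqC⟩
  let Z : algebraicClosure ℚ ℂ := ⟨z, mem_algebraicClosure_of_pow_eq_algebraMap hn hzC⟩
  let J : algebraicClosure ℚ ℂ := ⟨I, mem_algebraicClosure_of_pow_eq_algebraMap two_ne_zero hIC⟩
  have hT_sq : ∀ ψ : algebraicClosure ℚ ℂ →ₐ[ℚ] ℂ, ψ (T ^ 2) = (t : ℂ) ^ 2 := by
    intro ψ
    have hψZ : ψ Z ^ n = 1 := by
      rw [← map_pow, show Z ^ n = 1 from Subtype.ext hz, map_one]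
    have hψJ : ψ J ^ 2 = -1 := by
      rw [← map_pow, show J ^ 2 = -1 from Subtype.ext I_sq, map_neg, map_one]
    have hψrel : ψ Z - 1 = ψ J * ψ T * (ψ Z + 1) := by
      simpa using congrArg ψ (show Z - 1 = J * T * (Z + 1) from Subtype.ext hrel)
    have hψT : ψ T ^ N = (t : ℂ) ^ N := by
      rw [← map_pow, show T ^ N = algebraMap ℚ _ q from Subtype.ext htqC, AlgHom.commutes, htqC]
    rw [map_pow]
    exact sq_eq_sq_of_conj_eq_self_of_pow_eq_pow hN
      (conj_eq_self_of_sub_one_eq_mul_add_one (norm_eq_one_of_pow_eq_one hψZ hn) hψJ hψrel) hψT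
  -- The ascription selects the default `ℚ`-algebra instance rather than `IntermediateField.algebra'`.
  have : Algebra.IsAlgebraic ℚ (algebraicClosure ℚ ℂ) := algebraicClosure.isAlgebraic ℚ ℂ
  obtain ⟨r, hr⟩ := mem_range_algebraMap_of_forall_algHom_apply_eq hT_sq
  refine ⟨r, ?_⟩
  have hr' : (r : ℂ) = (t : ℂ) ^ 2 := by simpa using Subtype.ext_iff.mp hr
  exact_mod_cast hr'

theorem no_tan_pow_rational (N : ℕ) (hN : 3 ≤ N) :
    ¬ ∃ θ : ℚ, Real.cos (Real.pi * θ) ≠ 0 ∧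
      (∀ k : ℕ, 1 ≤ k → k ≤ N - 1 → Irrational (Real.tan (Real.pi * θ) ^ k)) ∧
      (∃ q : ℚ, Real.tan (Real.pi * θ) ^ N = q) := by
  rintro ⟨θ, hcos, hirr, q, hq⟩
  have hrel := exp_two_mul_mul_I_sub_one_eq_I_mul_tan_mul (x := (Real.pi * θ : ℝ))
    (by exact_mod_cast hcos)
  rw [← ofReal_tan] at hrel
  exact hirr 2 (by omega) (by omega) <| sq_mem_range_ratCast_of_sub_one_eq_I_mul_mul_add_one
    θ.den_nz (by omega) (exp_two_pi_mul_rat_mul_I_pow_den θ) hrel hq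
end

section
/- If n is an odd positive integer, θ is a rational number, and cos(πθ)^n is rational, then cos(πθ) ∈ {0, 1/2, -1/2, 1, -1}. -/
/-!
`2 cos (π r) = ζ + ζ⁻¹` for the root of unity `ζ = exp (π r i)`, so it lies in the Galois
extension `ℚ(ζ)/ℚ`, and each of its conjugates `σ ζ + (σ ζ)⁻¹` is real. All conjugates have the
same rational `n`-th power and `t ↦ tⁿ` is injective on `ℝ` for odd `n`, so `2 cos (π r)` is fixed
by the Galois group, hence rational, and Niven's theorem leaves the five values.
-/

open IntermediateField

theorem IsOfFinOrder.isIntegral {K L : Type*} [CommRing K] [Ring L] [Algebra K L] {x : L}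
    (hx : IsOfFinOrder x) : IsIntegral K x :=
  .of_pow hx.orderOf_pos (pow_orderOf_eq_one x ▸ isIntegral_one)

theorem IsOfFinOrder.isGalois_adjoin {K L : Type*} [Field K] [Field L] [Algebra K L] {ζ : L}
    (hζ : IsOfFinOrder ζ) : IsGalois K K⟮ζ⟯ := by
  have : NeZero (orderOf ζ) := ⟨hζ.orderOf_pos.ne'⟩
  have : IsCyclotomicExtension {orderOf ζ} K K⟮ζ⟯ := by
    change IsCyclotomicExtension {orderOf ζ} K K⟮ζ⟯.toSubalgebra
    rw [adjoin_simple_toSubalgebra_of_isAlgebraic hζ.isIntegral.isAlgebraic]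
    exact (IsPrimitiveRoot.orderOf ζ).adjoin_isCyclotomicExtension K
  exact IsCyclotomicExtension.isGalois {orderOf ζ} K K⟮ζ⟯

namespace Complex

theorem im_add_inv_eq_zero_of_pow_eq_one {w : ℂ} {m : ℕ} (hw : w ^ m = 1) (hm : m ≠ 0) :
    (w + w⁻¹).im = 0 := by
  rw [inv_eq_conj (norm_eq_one_of_pow_eq_one hw hm), add_conj]
  exact ofReal_im _

theorem eq_of_odd_pow_eq_of_im_eq_zero {u v : ℂ} (hu : u.im = 0) (hv : v.im = 0) {n : ℕ}
    (hn : Odd n) (h : u ^ n = v ^ n) : u = v := by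
  rw [← re_add_im u, ← re_add_im v, hu, hv] at h ⊢
  simp only [ofReal_zero, zero_mul, add_zero] at h ⊢
  norm_cast at h ⊢
  exact hn.strictMono_pow.injective h

end Complex

namespace IntermediateField

variable {F : Type*} [Field F] [Algebra F ℂ] {K : IntermediateField F ℂ}

theorem im_algEquiv_add_inv_eq_zero (σ : Gal(K/F)) {w : K} {m : ℕ} (hw : w ^ m = 1)
    (hm : m ≠ 0) : (σ (w + w⁻¹) : ℂ).im = 0 := by
  rw [map_add, map_inv₀, IntermediateField.coe_add, IntermediateField.coe_inv]
  refine Complex.im_add_inv_eq_zero_of_pow_eq_one ?_ hm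
  rw [← IntermediateField.coe_pow, ← map_pow, hw, map_one, IntermediateField.coe_one]

theorem mem_range_algebraMap_of_odd_pow [IsGalois F K] [FiniteDimensional F K] {c : K}
    (hc : ∀ σ : Gal(K/F), (σ c : ℂ).im = 0) {n : ℕ} (hn : Odd n)
    (hcn : c ^ n ∈ Set.range (algebraMap F K)) : c ∈ Set.range (algebraMap F K) := by
  obtain ⟨a, ha⟩ := hcn
  refine (IsGalois.mem_range_algebraMap_iff_fixed c).mpr fun σ ↦ Subtype.ext ?_
  refine Complex.eq_of_odd_pow_eq_of_im_eq_zero (hc σ) (by simpa using hc 1) hn ?_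
  rw [← IntermediateField.coe_pow, ← IntermediateField.coe_pow, ← map_pow, ← ha,
    AlgEquiv.commutes]

end IntermediateField

open scoped Real in
open Complex in
theorem exists_rat_eq_cos_rat_mul_pi_of_odd_pow {n : ℕ} (hn : Odd n) (r : ℚ)
    (h : ∃ q : ℚ, Real.cos (r * π) ^ n = q) : ∃ q : ℚ, Real.cos (r * π) = q := by
  obtain ⟨q, hq⟩ := h
  set ζ : ℂ := exp (r * π * I)
  have hζ : IsOfFinOrder ζ := isOfFinOrder_iff_pow_eq_one.mpr
    ⟨_, by positivity, exp_rat_mul_pi_mul_I_pow_two_mul_den r⟩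
  -- Ascribing the type `IsGalois ℚ ℚ⟮ζ⟯` would elaborate the `ℚ`-algebra structure as
  -- `DivisionRing.toRatAlgebra`, not the `IntermediateField.algebra'` expected below.
  have := hζ.isGalois_adjoin (K := ℚ)
  have := adjoin.finiteDimensional (hζ.isIntegral (K := ℚ))
  set z := AdjoinSimple.gen ℚ ζ
  have hz : ((z + z⁻¹ : ℚ⟮ζ⟯) : ℂ) = (2 * Real.cos (r * π) : ℝ) := by
    rw [IntermediateField.coe_add, IntermediateField.coe_inv, AdjoinSimple.coe_gen, ofReal_mul,
      ofReal_cos, ofReal_ofNat, two_cos, ← exp_neg, neg_mul]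
    push_cast
    rfl
  have hz_pow : z ^ orderOf ζ = 1 := Subtype.ext (pow_orderOf_eq_one ζ)
  obtain ⟨s, hs⟩ := mem_range_algebraMap_of_odd_pow
    (fun σ ↦ im_algEquiv_add_inv_eq_zero σ hz_pow hζ.orderOf_pos.ne') hn ⟨2 ^ n * q, by
      apply Subtype.ext
      rw [coe_algebraMap_apply, IntermediateField.coe_pow, hz, eq_ratCast, ← ofReal_pow,
        mul_pow, hq]
      push_cast
      rfl⟩
  have hs_cos : (s : ℝ) = 2 * Real.cos (r * π) := by
    apply ofReal_injective
    rw [← hz, ← hs, coe_algebraMap_apply, eq_ratCast, ofReal_ratCast]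
  exact ⟨s / 2, by push_cast; linarith⟩

theorem rational_cos_odd_pow_values_general (n : ℕ) (hodd : Odd n) (θ : ℚ)
    (h : ∃ q : ℚ, Real.cos (Real.pi * θ) ^ n = q) :
    Real.cos (Real.pi * θ) ∈ ({0, 1/2, -1/2, 1, -1} : Set ℝ) := by
  rw [mul_comm] at h ⊢
  have := niven ⟨θ, rfl⟩ (exists_rat_eq_cos_rat_mul_pi_of_odd_pow hodd θ h)
  simp only [Set.mem_insert_iff, Set.mem_singleton_iff] at this ⊢
  tauto

theorem rational_cos_odd_pow_values (n : ℕ) (hn : 0 < n) (hodd : Odd n) (θ : ℚ)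
    (h : ∃ q : ℚ, Real.cos (Real.pi * θ) ^ n = q) :
    Real.cos (Real.pi * θ) ∈ ({0, 1/2, -1/2, 1, -1} : Set ℝ) :=
  rational_cos_odd_pow_values_general n hodd θ h
end

section
/- If n is an even positive integer, θ is a rational number, and cos(πθ)^n is rational, then cos(πθ) ∈ {0, 1/2, -1/2, 1/√2, -1/√2, √3/2, -√3/2, 1, -1}. -/
/-!
Write `c = cos (π θ)` and `n = 2 m`. Then `d = cos (2 π θ) = 2 c² - 1` is the real part of the
primitive root of unity `η = exp (2 π i θ)`, and `(1 + d) ^ m = 2 ^ m c ^ n` is rational. On the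
unit circle `(z + 1)² = 2 z (1 + Re z)`, so `η` is a root of the rational polynomial
`(X + 1) ^ (2 m) - 2 ^ m r X ^ m`; hence so is every primitive root `u` of the same order, i.e.
every conjugate of `η`, which forces `Re u = d`. Summing over these conjugates, `φ(N) d` is minus
the subleading coefficient of the cyclotomic polynomial, an integer, so `d` is rational. Niven's
theorem gives `d ∈ {0, ±1/2, ±1}`, and `c² = (1 + d) / 2` leaves the nine listed values.
-/

open Polynomial
open scoped ComplexConjugate Real

theorem Complex.add_one_sq_of_norm_eq_one {z : ℂ} (hz : ‖z‖ = 1) :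
    (z + 1) ^ 2 = 2 * z * (1 + z.re) := by
  have hconj : z * conj z = 1 := by rw [mul_conj, normSq_eq_norm_sq, hz]; simp
  have hre : z + conj z = 2 * z.re := by rw [add_conj]; push_cast; ring
  linear_combination z * hre - hconj

theorem aeval_add_one_pow_sub_eq_zero_iff {z : ℂ} (hz : ‖z‖ = 1) (m : ℕ) (r : ℚ) :
    aeval z ((X + 1) ^ (2 * m) - C (2 ^ m * r) * X ^ m) = 0 ↔ (1 + z.re) ^ m = (r : ℝ) := by
  have hz0 : z ^ m ≠ 0 := pow_ne_zero _ (norm_ne_zero_iff.mp (by rw [hz]; exact one_ne_zero))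
  have key : aeval z ((X + 1) ^ (2 * m) - C (2 ^ m * r) * X ^ m)
      = 2 ^ m * z ^ m * (((1 + z.re) ^ m : ℝ) - (r : ℝ)) := by
    simp only [map_sub, map_mul, map_pow, map_add, aeval_X, map_one, aeval_C, pow_mul,
      Complex.add_one_sq_of_norm_eq_one hz, eq_ratCast, mul_pow]
    push_cast; ring
  rw [key, mul_eq_zero, or_iff_right (mul_ne_zero (pow_ne_zero _ two_ne_zero) hz0), sub_eq_zero]
  exact_mod_cast Iff.rfl

theorem IsPrimitiveRoot.aeval_eq_zero_of_aeval_eq_zero {K : Type*} [Field K] [CharZero K]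
    {N : ℕ} (hN : 0 < N) {ζ ω : K} (hζ : IsPrimitiveRoot ζ N) (hω : IsPrimitiveRoot ω N)
    {P : ℚ[X]} (hP : aeval ζ P = 0) : aeval ω P = 0 := by
  obtain ⟨Q, rfl⟩ := minpoly.dvd ℚ ζ hP
  rw [← cyclotomic_eq_minpoly_rat hζ hN, cyclotomic_eq_minpoly_rat hω hN, map_mul,
    minpoly.aeval, zero_mul]

theorem exists_intCast_eq_sum_primitiveRoots (K : Type*) [Field K] [CharZero K] [IsAlgClosed K]
    (N : ℕ) : ∃ k : ℤ, ∑ u ∈ primitiveRoots N K, u = k := by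
  rcases N.eq_zero_or_pos with rfl | hN
  · exact ⟨0, by simp⟩
  have : NeZero (N : K) := ⟨by exact_mod_cast hN.ne'⟩
  refine ⟨-(cyclotomic N ℤ).nextCoeff, ?_⟩
  have hsum := (IsAlgClosed.splits (cyclotomic N K)).nextCoeff_eq_neg_sum_roots_of_monic
    (cyclotomic.monic N K)
  rw [cyclotomic.roots_eq_primitiveRoots_val, ← map_cyclotomic_int,
    nextCoeff_map (Int.castRingHom K).injective_int] at hsum
  rw [Finset.sum_eq_multiset_sum, Multiset.map_id', Int.cast_neg,
    ← eq_intCast (Int.castRingHom K), hsum, neg_neg]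

theorem exists_rat_eq_of_forall_mem_primitiveRoots_re_eq {N : ℕ} (hN : 0 < N) {d : ℝ}
    (h : ∀ u ∈ primitiveRoots N ℂ, u.re = d) : ∃ q : ℚ, d = q := by
  obtain ⟨k, hk⟩ := exists_intCast_eq_sum_primitiveRoots ℂ N
  have hcard := (Complex.isPrimitiveRoot_exp N hN.ne').card_primitiveRoots
  have hφ : (N.totient : ℝ) ≠ 0 := by exact_mod_cast (Nat.totient_pos.2 hN).ne'
  refine ⟨k / N.totient, ?_⟩
  have hre := congrArg Complex.re hk
  rw [Complex.re_sum, Finset.sum_congr rfl h, Finset.sum_const, hcard, nsmul_eq_mul,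
    Complex.intCast_re] at hre
  push_cast
  field_simp
  linarith

theorem IsPrimitiveRoot.exists_rat_re_eq_of_one_add_re_pow_eq_rat {N m : ℕ} {η : ℂ}
    (hη : IsPrimitiveRoot η N) (hN : 0 < N) (hm : m ≠ 0) {r : ℚ} (hr : (1 + η.re) ^ m = r) :
    ∃ q : ℚ, η.re = q := by
  have hηnorm := hη.norm'_eq_one hN.ne'
  have hPη := (aeval_add_one_pow_sub_eq_zero_iff hηnorm m r).2 hr
  refine exists_rat_eq_of_forall_mem_primitiveRoots_re_eq hN fun u hu ↦ ?_
  have hu' := (mem_primitiveRoots hN).1 hu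
  have hunorm := hu'.norm'_eq_one hN.ne'
  have hPu := (aeval_add_one_pow_sub_eq_zero_iff hunorm m r).1
    (hη.aeval_eq_zero_of_aeval_eq_zero hN hu' hPη)
  have one_add_re_nonneg (z : ℂ) (hz : ‖z‖ = 1) : 0 ≤ 1 + z.re := by
    linarith [neg_le_of_abs_le (hz ▸ Complex.abs_re_le_norm z)]
  linarith [(pow_left_inj₀ (one_add_re_nonneg u hunorm) (one_add_re_nonneg η hηnorm) hm).1
    (hPu.trans hr.symm)]

theorem Real.exists_rat_cos_eq_of_one_add_cos_pow_eq_rat (θ : ℚ) {m : ℕ} (hm : m ≠ 0)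
    {r : ℚ} (hr : (1 + Real.cos (θ * π)) ^ m = r) : ∃ q : ℚ, Real.cos (θ * π) = q := by
  have hη := Complex.isPrimitiveRoot_exp_rat (θ / 2)
  have hre :
      (Complex.exp (2 * π * Complex.I * ((θ / 2 : ℚ) : ℂ))).re = Real.cos (θ * π) := by
    rw [← Complex.exp_ofReal_mul_I_re]; push_cast; ring_nf
  rw [← hre] at hr ⊢
  exact hη.exists_rat_re_eq_of_one_add_re_pow_eq_rat (θ / 2).den_pos hm hr

theorem mem_of_two_mul_sq_sub_one_mem {x : ℝ}
    (h : 2 * x ^ 2 - 1 ∈ ({-1, -1 / 2, 0, 1 / 2, 1} : Set ℝ)) :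
    x ∈ ({0, 1/2, -1/2, 1 / Real.sqrt 2, -(1 / Real.sqrt 2),
        Real.sqrt 3 / 2, -(Real.sqrt 3 / 2), 1, -1} : Set ℝ) := by
  have h2 : (1 / Real.sqrt 2) ^ 2 = 1 / 2 := by rw [div_pow, Real.sq_sqrt zero_le_two]; norm_num
  have h3 : (Real.sqrt 3 / 2) ^ 2 = 3 / 4 := by rw [div_pow, Real.sq_sqrt zero_le_three]; norm_num
  simp only [Set.mem_insert_iff, Set.mem_singleton_iff] at h ⊢
  rcases h with h | h | h | h | h
  · left; nlinarith
  · have := sq_eq_sq_iff_eq_or_eq_neg.1 (show x ^ 2 = (1 / 2) ^ 2 by linarith)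
    rw [neg_div]
    tauto
  · have := sq_eq_sq_iff_eq_or_eq_neg.1 (show x ^ 2 = (1 / Real.sqrt 2) ^ 2 by linarith)
    tauto
  · have := sq_eq_sq_iff_eq_or_eq_neg.1 (show x ^ 2 = (Real.sqrt 3 / 2) ^ 2 by linarith)
    tauto
  · have := sq_eq_sq_iff_eq_or_eq_neg.1 (show x ^ 2 = 1 ^ 2 by linarith)
    tauto

theorem rational_cos_even_pow_values (n : ℕ) (hn : 0 < n) (heven : Even n) (θ : ℚ)
    (h : ∃ q : ℚ, Real.cos (Real.pi * θ) ^ n = q) :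
    Real.cos (Real.pi * θ) ∈
      ({0, 1/2, -1/2, 1 / Real.sqrt 2, -(1 / Real.sqrt 2),
        Real.sqrt 3 / 2, -(Real.sqrt 3 / 2), 1, -1} : Set ℝ) := by
  obtain ⟨q, hq⟩ := h
  obtain ⟨m, rfl⟩ := heven
  have hdouble : Real.cos ((2 * θ : ℚ) * π) = 2 * Real.cos (π * θ) ^ 2 - 1 := by
    rw [← Real.cos_two_mul]; push_cast; ring_nf
  have hrat : ∃ r : ℚ, Real.cos ((2 * θ : ℚ) * π) = r := by
    refine Real.exists_rat_cos_eq_of_one_add_cos_pow_eq_rat (2 * θ) (m := m) (r := 2 ^ m * q)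
      (by omega) ?_
    rw [hdouble, Rat.cast_mul, Rat.cast_pow, ← hq]
    ring
  have hniven := niven ⟨2 * θ, rfl⟩ hrat
  rw [hdouble] at hniven
  exact mem_of_two_mul_sq_sub_one_mem hniven
end

section
/- If n is an odd positive integer, θ is a rational number, and sin(πθ)^n is rational, then sin(πθ) ∈ {0, 1/2, -1/2, 1, -1}. -/
/-!
Put `x = sin (π θ) = cos (π r)` with `r = 1/2 - θ`; then `x` is a root of `T_N - 1` for
`N = 2 · den r`. Every complex root of `T_N - 1` has the form `cos w` with `cos (N w) = 1`, so `w`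
and hence the root are real. Consequently every conjugate `y` of `x` over `ℚ` is real and
satisfies `y ^ n = x ^ n`; as `n` is odd, `y = x`. A separable element without other conjugates
is rational, and Niven's theorem lists the rational values of `sin` at rational multiples of `π`.
-/

open Polynomial Polynomial.Chebyshev Real

theorem Polynomial.Chebyshev.exists_ofReal_eq_of_eval_T_complex_eq_one {N : ℕ} (hN : N ≠ 0)
    {z : ℂ} (hz : (T ℂ N).eval z = 1) : ∃ t : ℝ, z = t := by
  obtain ⟨w, rfl⟩ := Complex.cos_surjective z
  rw [T_complex_cos, Complex.cos_eq_one_iff] at hz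
  obtain ⟨k, hk⟩ := hz
  refine ⟨Real.cos (k * (2 * π) / N), ?_⟩
  push_cast
  rw [hk, Int.cast_natCast, mul_div_cancel_left₀ _ (by exact_mod_cast hN)]

theorem IsConjRoot.aeval_eq_zero_of_aeval_eq_zero {K A : Type*} [Field K] [Ring A] [Algebra K A]
    {x y : A} (h : IsConjRoot K x y) {p : K[X]} (hp : aeval x p = 0) : aeval y p = 0 := by
  obtain ⟨g, rfl⟩ := minpoly.dvd K x hp
  rw [map_mul, h.aeval_eq_zero, zero_mul]

theorem eq_of_isConjRoot_of_eval_T_eq_one_of_odd_pow {N n : ℕ} (hN : N ≠ 0) (hn : Odd n)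
    {x y : ℂ} (hx : (T ℂ N).eval x = 1) {q : ℚ} (hxq : x ^ n = q) (hxy : IsConjRoot ℚ x y) :
    x = y := by
  have hy : (T ℂ N).eval y = 1 := by
    have := hxy.aeval_eq_zero_of_aeval_eq_zero (p := T ℚ N - 1) (by simp [aeval_T, hx])
    simpa [aeval_T, sub_eq_zero] using this
  have hyq : y ^ n = q := by
    have := hxy.aeval_eq_zero_of_aeval_eq_zero (p := X ^ n - C q) (by simp [hxq])
    simpa [sub_eq_zero] using this
  obtain ⟨s, rfl⟩ := exists_ofReal_eq_of_eval_T_complex_eq_one hN hx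
  obtain ⟨t, rfl⟩ := exists_ofReal_eq_of_eval_T_complex_eq_one hN hy
  have hst : s ^ n = t ^ n := by exact_mod_cast hxq.trans hyq.symm
  rw [hn.strictMono_pow.injective hst]

theorem exists_rat_eq_of_eval_T_eq_one_of_odd_pow {N n : ℕ} (hN : N ≠ 0) (hn : Odd n) {x : ℝ}
    (hx : (T ℝ N).eval x = 1) (hpow : ∃ q : ℚ, x ^ n = q) : ∃ q : ℚ, x = q := by
  obtain ⟨q, hq⟩ := hpow
  have hxq : (x : ℂ) ^ n = q := by exact_mod_cast hq
  have hint : IsIntegral ℚ (x : ℂ) := by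
    refine .of_pow hn.pos ?_
    rw [hxq, ← eq_ratCast (algebraMap ℚ ℂ)]
    exact isIntegral_algebraMap
  have hsep : IsSeparable ℚ (x : ℂ) := (minpoly.irreducible hint).separable
  have hbot : (x : ℂ) ∈ (⊥ : Subalgebra ℚ ℂ) := by
    by_contra hx'
    obtain ⟨y, hne, hxy⟩ :=
      (notMem_iff_exists_ne_and_isConjRoot hsep (IsAlgClosed.splits _)).mp hx'
    exact hne (eq_of_isConjRoot_of_eval_T_eq_one_of_odd_pow hN hn (by exact_mod_cast hx) hxq hxy)
  obtain ⟨r, hr⟩ := Algebra.mem_bot.mp hbot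
  rw [eq_ratCast] at hr
  exact ⟨r, by exact_mod_cast hr.symm⟩

theorem Real.eval_T_cos_rat_mul_pi (r : ℚ) :
    (T ℝ (2 * r.den : ℕ)).eval (cos (r * π)) = 1 := by
  have hr : (r.den : ℝ) * r = r.num := by exact_mod_cast Rat.den_mul_eq_num r
  have hangle : (((2 * r.den : ℕ) : ℤ) : ℝ) * (r * π) = r.num * (2 * π) := by
    push_cast
    linear_combination 2 * π * hr
  rw [T_real_cos, hangle, cos_int_mul_two_pi]

theorem rational_sin_odd_pow_values_general (n : ℕ) (hodd : Odd n) (θ : ℚ)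
    (h : ∃ q : ℚ, Real.sin (Real.pi * θ) ^ n = q) :
    Real.sin (Real.pi * θ) ∈ ({0, 1/2, -1/2, 1, -1} : Set ℝ) := by
  have hcos : Real.sin (π * θ) = Real.cos (((1 / 2 - θ : ℚ) : ℝ) * π) := by
    rw [← Real.cos_pi_div_two_sub]
    push_cast
    ring_nf
  obtain ⟨q, hq⟩ := exists_rat_eq_of_eval_T_eq_one_of_odd_pow (by positivity) hodd
    (hcos ▸ Real.eval_T_cos_rat_mul_pi _) (hcos ▸ h)
  have hniven := niven_sin ⟨θ, mul_comm _ _⟩ ⟨q, hq⟩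
  simp only [Set.mem_insert_iff, Set.mem_singleton_iff] at hniven ⊢
  tauto

theorem rational_sin_odd_pow_values (n : ℕ) (hn : 0 < n) (hodd : Odd n) (θ : ℚ)
    (h : ∃ q : ℚ, Real.sin (Real.pi * θ) ^ n = q) :
    Real.sin (Real.pi * θ) ∈ ({0, 1/2, -1/2, 1, -1} : Set ℝ) :=
  rational_sin_odd_pow_values_general n hodd θ h
end

section
/- If n is an even positive integer, θ is a rational number, and sin(πθ)^n is rational, then sin(πθ) ∈ {0, 1/2, -1/2, 1/√2, -1/√2, √3/2, -√3/2, 1, -1}. -/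
/-!
With `ζ = exp (2πiθ)`, a root of unity, `x = 4 sin²(πθ) = 2 - ζ - ζ⁻¹`. Every Galois conjugate
of `x` is `2 - ω - ω⁻¹ = |1 - ω|²` for another root of unity `ω`, so a nonnegative real, and it
shares with `x` the rational value `x ^ m` (`n = 2m`). Positive `m`-th roots being unique, all
conjugates equal `x`, so `x` is rational. Then `cos (2πθ) = 1 - x / 2` is rational, and Niven's
theorem leaves only the listed values.
-/

open Polynomial IntermediateField ComplexConjugate

theorem Complex.two_sub_exp_sub_inv_eq_four_mul_sin_sq (x : ℂ) :
    2 - exp (2 * x * I) - (exp (2 * x * I))⁻¹ = 4 * sin x ^ 2 := by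
  rw [← exp_neg, ← neg_mul]
  linear_combination two_cos (2 * x) - 2 * cos_two_mul x - 4 * cos_sq' x

theorem Complex.two_sub_sub_inv_eq_normSq {ω : ℂ} (hω : ‖ω‖ = 1) :
    2 - ω - ω⁻¹ = normSq (1 - ω) := by
  have hconj : ω * conj ω = 1 := by
    rw [mul_conj, normSq_eq_norm_sq, hω, one_pow, ofReal_one]
  rw [inv_eq_conj hω, normSq_eq_conj_mul_self, map_sub, map_one]
  linear_combination -hconj

theorem exists_pow_eq_one_of_aeval_minpoly_two_sub_sub_inv {ζ : ℂ} {b : ℕ} (hb : b ≠ 0)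
    (hζ : ζ ^ b = 1) {r : ℂ} (hr : aeval r (minpoly ℚ (2 - ζ - ζ⁻¹)) = 0) :
    ∃ ω : ℂ, ω ^ b = 1 ∧ r = 2 - ω - ω⁻¹ := by
  set g := AdjoinSimple.gen ℚ ζ
  have hmem : 2 - ζ - ζ⁻¹ ∈ ℚ⟮ζ⟯ := (2 - g - g⁻¹).2
  have hsplits : ∀ s ∈ ({ζ} : Set ℂ), IsIntegral ℚ s ∧
      ((minpoly ℚ s).map (algebraMap ℚ ℂ)).Splits := by
    rintro s rfl
    exact ⟨.of_pow (Nat.pos_of_ne_zero hb) (hζ ▸ isIntegral_one), IsAlgClosed.splits _⟩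
  obtain ⟨φ, hφ⟩ := exists_algHom_adjoin_of_splits_of_aeval hsplits hmem hr
  refine ⟨φ g, ?_, ?_⟩
  · rw [← map_pow, show g ^ b = 1 from Subtype.ext hζ, map_one]
  · rw [← hφ, show (⟨2 - ζ - ζ⁻¹, hmem⟩ : ℚ⟮ζ⟯) = 2 - g - g⁻¹ from rfl,
      map_sub, map_sub, map_inv₀, map_ofNat]

theorem exists_nonneg_real_eq_of_aeval_minpoly_two_sub_sub_inv {ζ : ℂ} {b : ℕ} (hb : b ≠ 0)
    (hζ : ζ ^ b = 1) {r : ℂ} (hr : aeval r (minpoly ℚ (2 - ζ - ζ⁻¹)) = 0) :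
    ∃ t : ℝ, 0 ≤ t ∧ r = t := by
  obtain ⟨ω, hω, rfl⟩ := exists_pow_eq_one_of_aeval_minpoly_two_sub_sub_inv hb hζ hr
  exact ⟨_, Complex.normSq_nonneg _,
    Complex.two_sub_sub_inv_eq_normSq (Complex.norm_eq_one_of_pow_eq_one hω hb)⟩

theorem exists_rat_eq_of_pow_eq_ratCast {x : ℂ} {m : ℕ} (hm : m ≠ 0) {q : ℚ} (hxq : x ^ m = q)
    (hconj : ∀ r : ℂ, aeval r (minpoly ℚ x) = 0 → ∃ t : ℝ, 0 ≤ t ∧ r = t) :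
    ∃ c : ℚ, x = c := by
  have hx : aeval x (X ^ m - C q) = 0 := by simp [hxq]
  have hint : IsIntegral ℚ x := ⟨_, monic_X_pow_sub_C q hm, hx⟩
  have hroot : ∀ r : ℂ, aeval r (minpoly ℚ x) = 0 → r = x := by
    intro r hr
    have hrq : r ^ m = q := by
      simpa [sub_eq_zero] using aeval_eq_zero_of_dvd_aeval_eq_zero (minpoly.dvd ℚ x hx) hr
    obtain ⟨t, ht, rfl⟩ := hconj r hr
    obtain ⟨s, hs, rfl⟩ := hconj x (minpoly.aeval ℚ x)
    rw [← hxq, ← Complex.ofReal_pow, ← Complex.ofReal_pow, Complex.ofReal_inj,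
      pow_left_inj₀ ht hs hm] at hrq
    rw [hrq]
  -- separability: the number of distinct conjugates is the degree of the minimal polynomial
  have hcard := card_rootSet_eq_natDegree (K := ℂ) (minpoly.irreducible hint).separable
    (IsAlgClosed.splits _)
  have hdeg : (minpoly ℚ x).natDegree = 1 := by
    refine le_antisymm ?_ (minpoly.natDegree_pos hint)
    rw [← hcard, Fintype.card_le_one_iff]
    rintro ⟨a, ha⟩ ⟨b, hb⟩
    rw [mem_rootSet] at ha hb
    simp [hroot a ha.2, hroot b hb.2]
  obtain ⟨c, hc⟩ := minpoly.natDegree_eq_one_iff.mp hdeg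
  exact ⟨c, hc.symm⟩

open Real in
theorem Real.sin_mem_of_sin_sq_eq_ratCast (θ : ℚ) (h : ∃ c : ℚ, sin (π * θ) ^ 2 = c) :
    sin (π * θ) ∈ ({0, 1/2, -1/2, 1 / √2, -(1 / √2), √3 / 2, -(√3 / 2), 1, -1} : Set ℝ) := by
  obtain ⟨c, hc⟩ := h
  have hsq : sin (π * θ) ^ 2 = (1 - cos (2 * (π * θ))) / 2 := by
    rw [cos_two_mul, cos_sq']; ring
  have hcos := niven (θ := 2 * (π * θ)) ⟨2 * θ, by push_cast; ring⟩
    ⟨1 - 2 * c, by push_cast; linarith⟩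
  simp only [Set.mem_insert_iff, Set.mem_singleton_iff] at hcos
  have hsq_eq (a : ℝ) (ha : sin (π * θ) ^ 2 = a ^ 2) : sin (π * θ) = a ∨ sin (π * θ) = -a :=
    sq_eq_sq_iff_eq_or_eq_neg.mp ha
  rcases hcos with h | h | h | h | h
  · rcases hsq_eq 1 (by rw [hsq, h]; norm_num) with h | h <;> norm_num [h]
  · rcases hsq_eq (√3 / 2) (by rw [hsq, h, div_pow, sq_sqrt (by norm_num)]; norm_num)
      with h | h <;> norm_num [h]
  · rcases hsq_eq (1 / √2) (by rw [hsq, h, div_pow, sq_sqrt (by norm_num)]; norm_num)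
      with h | h <;> norm_num [h]
  · rcases hsq_eq (1 / 2) (by rw [hsq, h]; norm_num) with h | h <;> norm_num [h]
  · rcases hsq_eq 0 (by rw [hsq, h]; norm_num) with h | h <;> norm_num [h]

theorem rational_sin_even_pow_values (n : ℕ) (hn : 0 < n) (heven : Even n) (θ : ℚ)
    (h : ∃ q : ℚ, Real.sin (Real.pi * θ) ^ n = q) :
    Real.sin (Real.pi * θ) ∈
      ({0, 1/2, -1/2, 1 / Real.sqrt 2, -(1 / Real.sqrt 2),
        Real.sqrt 3 / 2, -(Real.sqrt 3 / 2), 1, -1} : Set ℝ) := by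
  obtain ⟨q, hq⟩ := h
  obtain ⟨m, rfl⟩ := heven
  set ζ := Complex.exp (2 * (Real.pi * θ : ℂ) * Complex.I)
  have hζ : ζ ^ (2 * (2 * θ).den) = 1 := by
    convert Complex.exp_rat_mul_pi_mul_I_pow_two_mul_den (2 * θ) using 3
    push_cast; ring
  have hx : 2 - ζ - ζ⁻¹ = (4 * Real.sin (Real.pi * θ) ^ 2 : ℝ) := by
    rw [Complex.two_sub_exp_sub_inv_eq_four_mul_sin_sq]; push_cast; rfl
  have hxm : (2 - ζ - ζ⁻¹) ^ m = (4 ^ m * q : ℚ) := by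
    rw [hx, ← Complex.ofReal_pow, mul_pow, ← pow_mul, two_mul, hq]; push_cast; rfl
  obtain ⟨c, hc⟩ := exists_rat_eq_of_pow_eq_ratCast (by omega) hxm
    fun _ => exists_nonneg_real_eq_of_aeval_minpoly_two_sub_sub_inv (by positivity) hζ
  refine Real.sin_mem_of_sin_sq_eq_ratCast θ ⟨c / 4, ?_⟩
  have hsin : 4 * Real.sin (Real.pi * θ) ^ 2 = c := by exact_mod_cast hx.symm.trans hc
  push_cast; linarith
end

section
/- If n is an odd positive integer, θ is a rational number with cos(πθ) ≠ 0, and tan(πθ)^n is rational, then tan(πθ) ∈ {0, 1, -1}. -/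
/-!
Write `t = tan (π θ)` and `ζ = exp (2π i θ)`, a root of unity; then `t (1 + ζ) = i (1 - ζ)`.
Every conjugate of `t` over `ℚ` is the image of `t` under an embedding of `ℚ(ζ, i)` into `ℂ`,
so it satisfies the same relation with another root of unity and with `±i`, which forces it to
be real. A real conjugate is a real root of `X ^ n - q`, and for odd `n` the only one is `t`, so
`t` is rational. Then `cos (2π θ) = (1 - t²) / (1 + t²)` is rational, and Niven's theorem
leaves `t² ∈ {0, 1/3, 1, 3}`, of which only `0` and `1` are rational squares.
-/

open Complex Polynomial IntermediateField ComplexConjugate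

theorem mem_range_algebraMap_of_forall_aeval_minpoly_eq_zero {K L : Type*} [Field K]
    [PerfectField K] [Field L] [IsAlgClosed L] [Algebra K L] {x : L} (hx : IsIntegral K x)
    (h : ∀ y : L, aeval y (minpoly K x) = 0 → y = x) : x ∈ (algebraMap K L).range := by
  classical
  rw [← minpoly.natDegree_eq_one_iff,
    ← natSepDegree_eq_natDegree_of_separable _
      (PerfectField.separable_of_irreducible (minpoly.irreducible hx)),
    natSepDegree_eq_of_isAlgClosed L, Finset.card_eq_one]
  refine ⟨x, Finset.eq_singleton_iff_unique_mem.mpr ⟨?_, fun y hy => h y ?_⟩⟩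
  · simp [minpoly.ne_zero hx]
  · exact (mem_aroots.mp (Multiset.mem_toFinset.mp hy)).2

theorem Complex.tan_mul_one_add_exp_mul_I_sq {x : ℂ} (hx : cos x ≠ 0) :
    tan x * (1 + exp (x * I) ^ 2) = I * (1 - exp (x * I) ^ 2) := by
  have hsin : tan x * cos x = sin x := by rw [tan, div_mul_cancel₀ _ hx]
  have hexp : exp (x * I) * exp (-x * I) = 1 := by
    rw [← exp_add, neg_mul, add_neg_cancel, exp_zero]
  rw [cos, sin] at hsin
  linear_combination 2 * exp (x * I) * hsin + (I - tan x) * hexp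

theorem Complex.one_add_ne_zero_of_mul_one_add_eq {ζ J w : ℂ} (hJ : J ^ 2 = -1)
    (h : w * (1 + ζ) = J * (1 - ζ)) : 1 + ζ ≠ 0 := by
  intro h0
  have : J * 2 = 0 := by linear_combination -h + w * h0 + J * h0
  simp_all

theorem Complex.conj_eq_of_mul_one_add_eq {ζ J w : ℂ} (hζ : ‖ζ‖ = 1) (hJ : J ^ 2 = -1)
    (h : w * (1 + ζ) = J * (1 - ζ)) : conj w = w := by
  have hζ0 : ζ ≠ 0 := norm_ne_zero_iff.mp (by simp [hζ])
  have hconjζ : conj ζ = ζ⁻¹ := (inv_eq_conj hζ).symm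
  have hconjJ : conj J = -J := by
    have : (J - I) * (J + I) = 0 := by linear_combination hJ - I_sq
    rcases mul_eq_zero.mp this with h | h
    · simp [sub_eq_zero.mp h]
    · simp [eq_neg_of_add_eq_zero_left h]
  refine mul_right_cancel₀ (one_add_ne_zero_of_mul_one_add_eq hJ h) ?_
  have hc := congrArg conj h
  simp only [map_mul, map_add, map_sub, map_one, hconjζ, hconjJ] at hc
  field_simp at hc
  linear_combination hc - h

theorem Complex.conj_eq_of_aeval_minpoly_eq_zero {ζ t w : ℂ} {N : ℕ} (hN : N ≠ 0)
    (hζ : ζ ^ N = 1) (ht : t * (1 + ζ) = I * (1 - ζ)) (hw : aeval w (minpoly ℚ t) = 0) :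
    conj w = w := by
  set K := adjoin ℚ ({ζ, I} : Set ℂ)
  have hζK : ζ ∈ K := subset_adjoin _ _ (by simp)
  have hIK : I ∈ K := subset_adjoin _ _ (by simp)
  have htK : t ∈ K := by
    rw [eq_div_of_mul_eq (one_add_ne_zero_of_mul_one_add_eq I_sq ht) ht]
    exact div_mem (mul_mem hIK (sub_mem (one_mem _) hζK)) (add_mem (one_mem _) hζK)
  have hint : ∀ s ∈ ({ζ, I} : Set ℂ),
      IsIntegral ℚ s ∧ ((minpoly ℚ s).map (algebraMap ℚ ℂ)).Splits := by
    rintro s (rfl | rfl)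
    · exact ⟨.of_pow (Nat.pos_of_ne_zero hN) (hζ ▸ isIntegral_one), IsAlgClosed.splits _⟩
    · exact ⟨isIntegral_int_I.tower_top, IsAlgClosed.splits _⟩
  obtain ⟨φ, hφ⟩ := exists_algHom_adjoin_of_splits_of_aeval hint htK hw
  have hrel : (⟨t, htK⟩ : K) * (1 + ⟨ζ, hζK⟩) = ⟨I, hIK⟩ * (1 - ⟨ζ, hζK⟩) :=
    Subtype.ext ht
  refine conj_eq_of_mul_one_add_eq (ζ := φ ⟨ζ, hζK⟩) (J := φ ⟨I, hIK⟩) ?_ ?_ ?_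
  · refine norm_eq_one_of_pow_eq_one ?_ hN
    rw [← map_pow, show (⟨ζ, hζK⟩ : K) ^ N = 1 from Subtype.ext hζ, map_one]
  · rw [← map_pow, show (⟨I, hIK⟩ : K) ^ 2 = -1 from Subtype.ext I_sq, map_neg, map_one]
  · simpa [hφ] using congrArg φ hrel

theorem eq_of_aeval_minpoly_eq_zero_of_odd_pow {n : ℕ} (hn : Odd n) {t r : ℝ} {q : ℚ}
    (hq : t ^ n = q) (hr : aeval (r : ℂ) (minpoly ℚ (t : ℂ)) = 0) : r = t := by
  obtain ⟨p, hp⟩ : minpoly ℚ (t : ℂ) ∣ X ^ n - C q :=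
    minpoly.dvd _ _ (by simp [← ofReal_pow, hq])
  have hrq : (r : ℂ) ^ n - q = 0 := by simpa [hr] using congrArg (aeval (r : ℂ)) hp
  refine hn.strictMono_pow.injective ?_
  rw [hq]
  exact_mod_cast sub_eq_zero.mp hrq

open Real in
theorem Real.niven_tan {θ : ℚ} (hc : cos (θ * π) ≠ 0)
    (ht : ∃ r : ℚ, tan (θ * π) = r) : tan (θ * π) ∈ ({0, 1, -1} : Set ℝ) := by
  obtain ⟨r, hr⟩ := ht
  have hr2 : (1 + r ^ 2 : ℝ) ≠ 0 := by positivity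
  have hcos : cos (2 * (θ * π)) = (1 - r ^ 2) / (1 + r ^ 2) := by
    rw [cos_two_mul, ← inv_one_add_tan_sq hc, hr]
    field_simp
    ring
  have hniven := niven (θ := 2 * (θ * π)) ⟨2 * θ, by push_cast; ring⟩
    ⟨(1 - r ^ 2) / (1 + r ^ 2), by simp [hcos]⟩
  have hsq (a : ℚ) (h : (r : ℝ) ^ 2 = a) : IsSquare a :=
    ⟨r, by rw [← sq]; exact_mod_cast h.symm⟩
  simp only [hcos, Set.mem_insert_iff, Set.mem_singleton_iff] at hniven ⊢
  rw [hr]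
  rcases hniven with h | h | h | h | h <;> rw [div_eq_iff hr2] at h
  · linarith
  · exact absurd (hsq 3 (by push_cast; linarith)) (by norm_num [Rat.isSquare_iff])
  · exact .inr (sq_eq_one_iff.mp (by linarith))
  · exact absurd (hsq (1 / 3) (by push_cast; linarith)) (by norm_num [Rat.isSquare_iff])
  · exact .inl (pow_eq_zero_iff two_ne_zero |>.mp (by linarith))

theorem rational_tan_odd_pow_values_general (n : ℕ) (hodd : Odd n) (θ : ℚ)
    (hc : Real.cos (Real.pi * θ) ≠ 0)
    (h : ∃ q : ℚ, Real.tan (Real.pi * θ) ^ n = q) :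
    Real.tan (Real.pi * θ) ∈ ({0, 1, -1} : Set ℝ) := by
  obtain ⟨q, hq⟩ := h
  rw [mul_comm] at hc hq ⊢
  set t := Real.tan (θ * Real.pi)
  set ζ := exp (θ * Real.pi * I) ^ 2
  have hζ : ζ ^ θ.den = 1 := by rw [← pow_mul, exp_rat_mul_pi_mul_I_pow_two_mul_den]
  have hrel : (t : ℂ) * (1 + ζ) = I * (1 - ζ) := by
    rw [ofReal_tan]
    push_cast
    exact tan_mul_one_add_exp_mul_I_sq (by exact_mod_cast hc)
  have hint : IsIntegral ℚ (t : ℂ) :=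
    ⟨X ^ n - C q, monic_X_pow_sub_C _ hodd.pos.ne', by simp [← ofReal_pow, hq]⟩
  obtain ⟨r, hr⟩ := mem_range_algebraMap_of_forall_aeval_minpoly_eq_zero hint fun w hw => by
    obtain ⟨s, rfl⟩ :=
      conj_eq_iff_real.mp (conj_eq_of_aeval_minpoly_eq_zero θ.den_ne_zero hζ hrel hw)
    rw [eq_of_aeval_minpoly_eq_zero_of_odd_pow hodd hq hw]
  exact Real.niven_tan hc ⟨r, by rw [eq_ratCast] at hr; exact_mod_cast hr.symm⟩

theorem rational_tan_odd_pow_values (n : ℕ) (hn : 0 < n) (hodd : Odd n) (θ : ℚ)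
    (hc : Real.cos (Real.pi * θ) ≠ 0)
    (h : ∃ q : ℚ, Real.tan (Real.pi * θ) ^ n = q) :
    Real.tan (Real.pi * θ) ∈ ({0, 1, -1} : Set ℝ) :=
  rational_tan_odd_pow_values_general n hodd θ hc h
end

section
/- If n is an even positive integer, θ is a rational number with cos(πθ) ≠ 0, and tan(πθ)^n is rational, then tan(πθ) ∈ {0, 1/√3, -1/√3, 1, -1, √3, -√3}. -/
/-!
Put `c = cos (2πθ)`, so that `tan² (πθ) = (1 - c) / (1 + c)` and `((1 - c) / (1 + c)) ^ m = q`
for `n = 2m`. The number `c` is a root of `T_N - 1` for a Chebyshev polynomial `T_N`, so each of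
its conjugates over `ℚ` is a real cosine `y ∈ (-1, 1]` with `((1 - y) / (1 + y)) ^ m = q` too.
Nonnegative `m`-th roots are unique and `y ↦ (1 - y) / (1 + y)` is injective, so every conjugate
equals `c`, and `c` is rational. Niven's theorem leaves `c ∈ {-1/2, 0, 1/2, 1}`, that is
`tan² (πθ) ∈ {3, 1, 1/3, 0}`.
-/

open Polynomial Real

theorem mem_range_algebraMap_of_rootSet_minpoly_subset {K L : Type*} [Field K] [PerfectField K]
    [Field L] [IsAlgClosed L] [Algebra K L] {x : L} (hx : IsIntegral K x)
    (h : (minpoly K x).rootSet L ⊆ {x}) : x ∈ (algebraMap K L).range := by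
  classical
  rw [← minpoly.natDegree_eq_one_iff]
  have hcard := card_rootSet_eq_natDegree
    (PerfectField.separable_of_irreducible (minpoly.irreducible hx))
    (IsAlgClosed.splits ((minpoly K x).map (algebraMap K L)))
  have : Fintype.card ((minpoly K x).rootSet L) ≤ 1 := by
    rw [← Set.toFinset_card]
    simpa using Finset.card_le_card (Set.toFinset_subset_toFinset.mpr h)
  linarith [minpoly.natDegree_pos hx]

namespace Polynomial.Chebyshev

theorem exists_real_cos_eq_of_eval_T_eq_one {n : ℤ} (hn : n ≠ 0) {z : ℂ}
    (hz : (T ℂ n).eval z = 1) : ∃ w : ℝ, z = cos w := by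
  obtain ⟨w, rfl⟩ := Complex.cos_surjective z
  rw [T_complex_cos, Complex.cos_eq_one_iff] at hz
  obtain ⟨k, hk⟩ := hz
  refine ⟨k * (2 * π) / n, ?_⟩
  push_cast
  rw [hk]
  field_simp

theorem eval_T_two_mul_den_cos_rat_mul_pi (r : ℚ) :
    (T ℝ (2 * r.den)).eval (cos (r * π)) = 1 := by
  rw [T_real_cos]
  nth_rw 2 [← r.num_div_den]
  push_cast
  rw [show 2 * (r.den : ℝ) * (r.num / r.den * π) = r.num * (2 * π) by field_simp,
    cos_int_mul_two_pi]

end Polynomial.Chebyshev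

open Polynomial.Chebyshev in
theorem rootSet_minpoly_cos_rat_mul_pi_subset (r : ℚ) :
    (minpoly ℚ (cos (r * π) : ℂ)).rootSet ℂ ⊆ Set.range (fun w : ℝ ↦ (cos w : ℂ)) := by
  intro z hz
  have hTc : aeval (cos (r * π) : ℂ) (T ℚ (2 * r.den) - 1) = 0 := by
    rw [map_sub, aeval_T, map_one, sub_eq_zero, ← complex_ofReal_eval_T,
      eval_T_two_mul_den_cos_rat_mul_pi, Complex.ofReal_one]
  have hTz : aeval z (T ℚ (2 * r.den) - 1) = 0 :=
    aeval_eq_zero_of_dvd_aeval_eq_zero (minpoly.dvd ℚ _ hTc) (mem_rootSet.mp hz).2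
  rw [map_sub, aeval_T, map_one, sub_eq_zero] at hTz
  obtain ⟨w, hw⟩ := exists_real_cos_eq_of_eval_T_eq_one (by positivity) hTz
  exact ⟨w, hw.symm⟩

theorem isIntegral_rat_ofReal_cos_rat_mul_pi (r : ℚ) : IsIntegral ℚ (cos (r * π) : ℂ) :=
  ((isAlgebraic_cos_rat_mul_pi r).algebraMap.extendScalars
    (RingHom.injective_int (algebraMap ℤ ℚ))).isIntegral

theorem eq_of_one_sub_div_one_add_pow_eq {m : ℕ} (hm : m ≠ 0) {x y : ℝ}
    (hx : x ∈ Set.Ioc (-1) 1) (hy : y ∈ Set.Ioc (-1) 1)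
    (h : ((1 - x) / (1 + x)) ^ m = ((1 - y) / (1 + y)) ^ m) : x = y := by
  obtain ⟨hx₁, hx₂⟩ := hx
  obtain ⟨hy₁, hy₂⟩ := hy
  rw [pow_left_inj₀ (div_nonneg (by linarith) (by linarith))
    (div_nonneg (by linarith) (by linarith)) hm, div_eq_div_iff (by linarith) (by linarith)] at h
  nlinarith

theorem exists_rat_cos_rat_mul_pi_of_pow_eq_rat (r : ℚ) {m : ℕ} (hm : m ≠ 0)
    (hc : cos (r * π) ≠ -1) {q : ℚ}
    (hq : ((1 - cos (r * π)) / (1 + cos (r * π))) ^ m = q) : ∃ s : ℚ, cos (r * π) = s := by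
  set c := cos (r * π)
  set F : ℚ[X] := (1 - X) ^ m - C q * (1 + X) ^ m
  have hF : ∀ y : ℝ, aeval (y : ℂ) F = 0 ↔ (1 - y) ^ m = q * (1 + y) ^ m := by
    intro y
    simp only [F, map_sub, map_mul, map_pow, map_add, map_one, aeval_X, aeval_C, sub_eq_zero,
      eq_ratCast]
    exact_mod_cast Iff.rfl
  have hc_mem : c ∈ Set.Ioc (-1) 1 := ⟨(neg_one_le_cos _).lt_of_ne' hc, cos_le_one _⟩
  have hFc : aeval (c : ℂ) F = 0 := by
    rw [hF, ← hq, div_pow, div_mul_cancel₀ _ (pow_ne_zero _ (by linarith [hc_mem.1]))]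
  have hconj : (minpoly ℚ (c : ℂ)).rootSet ℂ ⊆ {(c : ℂ)} := by
    intro z hz
    obtain ⟨w, rfl⟩ := rootSet_minpoly_cos_rat_mul_pi_subset r hz
    have hFw : (1 - cos w) ^ m = q * (1 + cos w) ^ m :=
      (hF _).1 (aeval_eq_zero_of_dvd_aeval_eq_zero (minpoly.dvd ℚ _ hFc) (mem_rootSet.mp hz).2)
    have hw : cos w ≠ -1 := by
      intro h
      simp [h, hm] at hFw
    have hw_mem : cos w ∈ Set.Ioc (-1) 1 := ⟨(neg_one_le_cos _).lt_of_ne' hw, cos_le_one _⟩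
    rw [Set.mem_singleton_iff, ← eq_of_one_sub_div_one_add_pow_eq hm hw_mem hc_mem (by
      rw [hq, div_pow, hFw, mul_div_cancel_right₀ _ (pow_ne_zero _ (by linarith [hw_mem.1]))])]
  obtain ⟨s, hs⟩ := mem_range_algebraMap_of_rootSet_minpoly_subset
    (isIntegral_rat_ofReal_cos_rat_mul_pi r) hconj
  exact ⟨s, by rw [eq_ratCast] at hs; exact_mod_cast hs.symm⟩

theorem cos_two_mul_ne_neg_one {x : ℝ} (hx : cos x ≠ 0) : cos (2 * x) ≠ -1 := by
  rw [cos_two_mul]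
  intro h
  exact hx (pow_eq_zero_iff two_ne_zero |>.mp (by linarith))

theorem tan_sq_eq_one_sub_cos_two_mul_div {x : ℝ} (hx : cos x ≠ 0) :
    tan x ^ 2 = (1 - cos (2 * x)) / (1 + cos (2 * x)) := by
  rw [tan_eq_sin_div_cos, div_pow, cos_two_mul, sin_sq]
  field_simp
  ring

theorem tan_mem_of_cos_two_mul_mem {x : ℝ} (hx : cos x ≠ 0)
    (h : cos (2 * x) ∈ ({-1, -1 / 2, 0, 1 / 2, 1} : Set ℝ)) :
    tan x ∈ ({0, 1 / √3, -(1 / √3), 1, -1, √3, -√3} : Set ℝ) := by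
  have h3 : √3 ^ 2 = 3 := sq_sqrt (by norm_num)
  obtain ⟨a, ha, hta⟩ : ∃ a ∈ ({0, 1 / √3, 1, √3} : Set ℝ), tan x ^ 2 = a ^ 2 := by
    rw [tan_sq_eq_one_sub_cos_two_mul_div hx]
    rcases h with h | h | h | h | h
    · exact absurd h (cos_two_mul_ne_neg_one hx)
    · exact ⟨√3, by simp, by rw [h, h3]; norm_num⟩
    · exact ⟨1, by simp, by rw [h]; norm_num⟩
    · exact ⟨1 / √3, by simp, by rw [h, div_pow, h3]; norm_num⟩
    · exact ⟨0, by simp, by rw [h]; norm_num⟩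
  rcases sq_eq_sq_iff_eq_or_eq_neg.mp hta with ht | ht <;> rw [ht] <;>
    rcases ha with rfl | rfl | rfl | rfl <;> simp

theorem rational_tan_even_pow_values (n : ℕ) (hn : 0 < n) (heven : Even n) (θ : ℚ)
    (hc : Real.cos (Real.pi * θ) ≠ 0)
    (h : ∃ q : ℚ, Real.tan (Real.pi * θ) ^ n = q) :
    Real.tan (Real.pi * θ) ∈
      ({0, 1 / Real.sqrt 3, -(1 / Real.sqrt 3), 1, -1,
        Real.sqrt 3, -Real.sqrt 3} : Set ℝ) := by
  obtain ⟨q, hq⟩ := h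
  obtain ⟨m, rfl⟩ := heven
  rw [← two_mul, pow_mul, tan_sq_eq_one_sub_cos_two_mul_div hc] at hq
  have h2θ : 2 * (π * θ) = ((2 * θ : ℚ) : ℝ) * π := by push_cast; ring
  rw [h2θ] at hq
  apply tan_mem_of_cos_two_mul_mem hc
  rw [h2θ]
  exact niven ⟨2 * θ, rfl⟩ <| exists_rat_cos_rat_mul_pi_of_pow_eq_rat (2 * θ) (by omega)
    (h2θ ▸ cos_two_mul_ne_neg_one hc) hq
end

section
/- Let n ≥ 2 be an integer and α a positive rational number such that α^(k/n) is irrational for every k with 1 ≤ k ≤ n − 1. Then the polynomial X^n − α is irreducible over ℚ. -/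
/-!
A monic factor `g` of `X ^ n - α` of degree `d` has `d` complex roots, each an `n`-th root of `α`
and hence of absolute value `α ^ (1 / n)`. So `|g(0)| = α ^ (d / n)`, which is rational since `g`
has rational coefficients. A proper factor has `0 < d < n`, so this contradicts the hypothesis.
-/

open Polynomial

lemma norm_eq_norm_pow_rpow_inv {K : Type*} [NormedDivisionRing K] (z : K) {n : ℕ} (hn : n ≠ 0) :
    ‖z‖ = ‖z ^ n‖ ^ (n⁻¹ : ℝ) := by
  rw [norm_pow, Real.pow_rpow_inv_natCast (norm_nonneg z) hn]

lemma Polynomial.Splits.norm_coeff_zero_eq_pow {K : Type*} [NormedField K] {p : K[X]}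
    (hp : p.Splits) (hm : p.Monic) {r : ℝ} (hr : ∀ z ∈ p.roots, ‖z‖ = r) :
    ‖p.coeff 0‖ = r ^ p.natDegree := by
  have hprod : ‖p.roots.prod‖ = (p.roots.map (‖·‖)).prod :=
    map_multiset_prod (normHom : K →*₀ ℝ) p.roots
  rw [hp.coeff_zero_eq_prod_roots_of_monic hm, norm_mul, norm_pow, norm_neg, norm_one, one_pow,
    one_mul, hprod, Multiset.map_congr rfl hr, Multiset.map_const', Multiset.prod_replicate,
    ← hp.natDegree_eq_card_roots]

lemma Polynomial.norm_coeff_zero_of_monic_of_dvd_X_pow_sub_C {K : Type*} [NormedField K]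
    [IsAlgClosed K] {p : K[X]} (hm : p.Monic) {n : ℕ} (hn : n ≠ 0) {a : K}
    (hdvd : p ∣ X ^ n - C a) : ‖p.coeff 0‖ = ‖a‖ ^ ((p.natDegree : ℝ) / n) := by
  have hroot : ∀ z ∈ p.roots, ‖z‖ = ‖a‖ ^ (n⁻¹ : ℝ) := by
    intro z hz
    have hza : z ^ n = a := by
      simpa [sub_eq_zero] using (isRoot_of_mem_roots hz).dvd hdvd
    rw [norm_eq_norm_pow_rpow_inv z hn, hza]
  rw [(IsAlgClosed.splits p).norm_coeff_zero_eq_pow hm hroot, ← Real.rpow_natCast,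
    ← Real.rpow_mul (norm_nonneg a), inv_mul_eq_div]

theorem binomial_irreducible (n : ℕ) (hn : 2 ≤ n) (α : ℚ) (hα : 0 < α)
    (hirr : ∀ k : ℕ, 1 ≤ k → k ≤ n - 1 → Irrational ((α : ℝ) ^ ((k : ℝ) / (n : ℝ)))) :
    Irreducible (Polynomial.X ^ n - Polynomial.C α : Polynomial ℚ) := by
  have hn0 : n ≠ 0 := by omega
  have hmonic : (X ^ n - C α : ℚ[X]).Monic := monic_X_pow_sub_C α hn0
  have hne1 : (X ^ n - C α : ℚ[X]) ≠ 1 :=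
    ne_of_apply_ne natDegree (by rwa [natDegree_X_pow_sub_C, natDegree_one])
  rw [hmonic.irreducible_iff_lt_natDegree_lt hne1, natDegree_X_pow_sub_C]
  intro g hg hdeg hdvd
  rw [Finset.mem_Ioc] at hdeg
  have hcoeff : |(g.coeff 0 : ℝ)| = (α : ℝ) ^ ((g.natDegree : ℝ) / n) := by
    have hdvdℂ : g.map (algebraMap ℚ ℂ) ∣ X ^ n - C (α : ℂ) := by
      simpa using map_dvd (algebraMap ℚ ℂ) hdvd
    have := norm_coeff_zero_of_monic_of_dvd_X_pow_sub_C (hg.map _) hn0 hdvdℂ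
    rwa [coeff_map, natDegree_map, eq_ratCast, Complex.norm_ratCast, Complex.norm_ratCast,
      abs_of_pos (Rat.cast_pos.mpr hα : (0 : ℝ) < α)] at this
  exact hirr g.natDegree hdeg.1 (by omega) ⟨|g.coeff 0|, by rw [Rat.cast_abs, hcoeff]⟩
end

section
/- Let n ≥ 2 be an integer and α a positive rational number such that α^(k/n) is irrational for every k with 1 ≤ k ≤ n − 1. Then the field extension ℚ(α^(1/n)) of ℚ generated by the real n-th root of α has degree n over ℚ. -/
/-!
If `x = α^(1/n)` has degree `d` over `ℚ`, taking norms from `ℚ(x)` in `x ^ n = α` gives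
`N(x) ^ n = α ^ d`, so `α ^ (d/n) = |N(x)|` is rational. Since `1 ≤ d ≤ n`, the irrationality
hypothesis forces `d = n`.
-/

open IntermediateField Module Polynomial

section PowEqAlgebraMap

variable {K L : Type*} [Field K] [Field L] [Algebra K L] {n : ℕ} {a : K} {x : L}

theorem isIntegral_of_pow_eq_algebraMap (hn : n ≠ 0) (hx : x ^ n = algebraMap K L a) :
    IsIntegral K x :=
  .of_pow (Nat.pos_of_ne_zero hn) (hx ▸ isIntegral_algebraMap)

theorem finrank_adjoin_le_of_pow_eq_algebraMap (hn : n ≠ 0) (hx : x ^ n = algebraMap K L a) :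
    finrank K K⟮x⟯ ≤ n := by
  rw [adjoin.finrank (isIntegral_of_pow_eq_algebraMap hn hx)]
  have hroot : aeval x (X ^ n - C a) = 0 := by simp [hx]
  simpa using natDegree_le_of_dvd (minpoly.dvd K x hroot) (X_pow_sub_C_ne_zero (by omega) a)

theorem norm_adjoinSimple_gen_pow_of_pow_eq_algebraMap (hn : n ≠ 0)
    (hx : x ^ n = algebraMap K L a) :
    Algebra.norm K (AdjoinSimple.gen K x) ^ n = a ^ finrank K K⟮x⟯ := by
  have := adjoin.finiteDimensional (isIntegral_of_pow_eq_algebraMap hn hx)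
  have hgen : AdjoinSimple.gen K x ^ n = algebraMap K K⟮x⟯ a := Subtype.ext (by simpa using hx)
  rw [← map_pow, hgen, Algebra.norm_algebraMap]

end PowEqAlgebraMap

theorem Real.rpow_natCast_div_eq_of_pow_eq {a b : ℝ} {d n : ℕ} (ha : 0 ≤ a) (hb : 0 ≤ b)
    (hn : n ≠ 0) (h : b ^ n = a ^ d) : a ^ ((d : ℝ) / n) = b := by
  rw [div_eq_mul_inv, rpow_mul ha, rpow_natCast, ← h, pow_rpow_inv_natCast hb hn]

theorem nth_root_degree (n : ℕ) (hn : 2 ≤ n) (α : ℚ) (hα : 0 < α)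
    (hirr : ∀ k : ℕ, 1 ≤ k → k ≤ n - 1 → Irrational ((α : ℝ) ^ ((k : ℝ) / (n : ℝ)))) :
    Module.finrank ℚ
      (IntermediateField.adjoin ℚ ({(α : ℝ) ^ ((1 : ℝ) / (n : ℝ))} : Set ℝ)) = n := by
  have hn0 : n ≠ 0 := by omega
  have hα₀ : (0 : ℝ) ≤ α := by exact_mod_cast hα.le
  set x : ℝ := (α : ℝ) ^ ((1 : ℝ) / (n : ℝ))
  have hx : x ^ n = algebraMap ℚ ℝ α := by
    simpa [x, one_div] using Real.rpow_inv_natCast_pow hα₀ hn0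
  have := adjoin.finiteDimensional (isIntegral_of_pow_eq_algebraMap hn0 hx)
  set d := finrank ℚ ℚ⟮x⟯
  have hd_pos : 0 < d := finrank_pos
  have hd_le : d ≤ n := finrank_adjoin_le_of_pow_eq_algebraMap hn0 hx
  set b := Algebra.norm ℚ (AdjoinSimple.gen ℚ x)
  have hbα : b ^ n = α ^ d := norm_adjoinSimple_gen_pow_of_pow_eq_algebraMap hn0 hx
  have hb : (|b| : ℝ) ^ n = (α : ℝ) ^ d := by
    rw [← abs_pow, ← Rat.cast_pow, hbα, Rat.cast_pow, abs_of_nonneg (pow_nonneg hα₀ d)]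
  by_contra hdn
  refine (hirr d hd_pos (by omega)).ne_rat |b| ?_
  rw [Rat.cast_abs]
  exact Real.rpow_natCast_div_eq_of_pow_eq hα₀ (abs_nonneg _) hn0 hb
end

section
/- Let n ≥ 2 be an integer and α a positive rational number such that α^(k/n) is irrational for every k with 1 ≤ k ≤ n − 1. Then the real n-th root α^(1/n) does not lie in the n-th cyclotomic field ℚ(ζ_n). -/
/-!
If `x = α^(1/n)` lay in `ℚ(ζ_n)`, its degree `d` over `ℚ` would satisfy `1 ≤ d ≤ φ(n) ≤ n - 1`.
The minimal polynomial of `x` divides `X^n - α`, so all its complex roots have absolute value `x`;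
hence its (rational) constant coefficient has absolute value `x^d = α^(d/n)`, contradicting the
irrationality of `α^(d/n)`.
-/

open Polynomial IntermediateField

theorem Polynomial.Splits.norm_coeff_zero_eq_pow_of_norm_roots {K : Type*} [NormedField K]
    {p : K[X]} (hsplit : p.Splits) (hmonic : p.Monic) {t : ℝ} (h : ∀ r ∈ p.roots, ‖r‖ = t) :
    ‖p.coeff 0‖ = t ^ p.natDegree := by
  rw [hsplit.coeff_zero_eq_prod_roots_of_monic hmonic, norm_mul, norm_pow, norm_neg, norm_one,
    one_pow, one_mul]
  change normHom p.roots.prod = _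
  have hnorms : p.roots.map normHom = .replicate p.roots.card t := by
    rw [Multiset.eq_replicate, Multiset.card_map]
    exact ⟨rfl, by simpa only [Multiset.forall_mem_map_iff, normHom_apply] using h⟩
  rw [map_multiset_prod, hnorms, Multiset.prod_replicate, hsplit.natDegree_eq_card_roots]

theorem norm_eq_norm_of_pow_eq_pow {K : Type*} [NormedDivisionRing K] {n : ℕ} (hn : n ≠ 0)
    {r s : K} (h : r ^ n = s ^ n) : ‖r‖ = ‖s‖ :=
  (pow_left_inj₀ (norm_nonneg r) (norm_nonneg s) hn).mp (by rw [← norm_pow, h, norm_pow])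

section PureRoot

variable {K L : Type*} [Field K] [NormedField L] [Algebra K L] {z : L} {n : ℕ} {c : K}

theorem norm_eq_of_mem_aroots_minpoly_of_pow_eq {r : L} (hn : n ≠ 0)
    (hz : z ^ n = algebraMap K L c) (hr : r ∈ (minpoly K z).aroots L) : ‖r‖ = ‖z‖ := by
  have hdvd : minpoly K z ∣ X ^ n - C c := minpoly.dvd K z (by simp [hz])
  have hroot : aeval r (X ^ n - C c : K[X]) = 0 := by
    obtain ⟨q, hq⟩ := hdvd
    rw [hq, map_mul, (mem_aroots.mp hr).2, zero_mul]
  refine norm_eq_norm_of_pow_eq_pow hn ?_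
  simp only [map_sub, map_pow, aeval_X, aeval_C, sub_eq_zero] at hroot
  rw [hroot, hz]

theorem norm_algebraMap_coeff_zero_minpoly_of_pow_eq [IsAlgClosed L] (hn : n ≠ 0)
    (hz : z ^ n = algebraMap K L c) :
    ‖algebraMap K L ((minpoly K z).coeff 0)‖ = ‖z‖ ^ (minpoly K z).natDegree := by
  have hint : IsIntegral K z := .of_pow (Nat.pos_of_ne_zero hn) (hz ▸ isIntegral_algebraMap)
  have hmonic := (minpoly.monic hint).map (algebraMap K L)
  rw [← coeff_map, ← natDegree_map (algebraMap K L)]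
  exact (IsAlgClosed.splits _).norm_coeff_zero_eq_pow_of_norm_roots hmonic
    fun r hr ↦ norm_eq_of_mem_aroots_minpoly_of_pow_eq hn hz hr

end PureRoot

theorem IsPrimitiveRoot.natDegree_minpoly_le_totient {L : Type*} [Field L] [CharZero L] {n : ℕ}
    [NeZero n] {ζ : L} (hζ : IsPrimitiveRoot ζ n) {z : L} (hz : z ∈ ℚ⟮ζ⟯) :
    (minpoly ℚ z).natDegree ≤ n.totient := by
  have hζint : IsIntegral ℚ ζ := (hζ.isIntegral (NeZero.pos n)).tower_top
  have := adjoin.finiteDimensional hζint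
  calc (minpoly ℚ z).natDegree = (minpoly ℚ (⟨z, hz⟩ : ℚ⟮ζ⟯)).natDegree :=
        congrArg natDegree (IntermediateField.minpoly_eq ⟨z, hz⟩).symm
    _ ≤ Module.finrank ℚ ℚ⟮ζ⟯ := minpoly.natDegree_le _
    _ = n.totient := by
        rw [adjoin.finrank hζint, ← cyclotomic_eq_minpoly_rat hζ (NeZero.pos n),
          natDegree_cyclotomic]

theorem nth_root_not_in_nth_cyclotomic (n : ℕ) (hn : 2 ≤ n) (α : ℚ) (hα : 0 < α)
    (hirr : ∀ k : ℕ, 1 ≤ k → k ≤ n - 1 → Irrational ((α : ℝ) ^ ((k : ℝ) / (n : ℝ))))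
    (ζ : ℂ) (hζ : IsPrimitiveRoot ζ n) :
    (((α : ℝ) ^ ((1 : ℝ) / (n : ℝ)) : ℝ) : ℂ) ∉
      IntermediateField.adjoin ℚ ({ζ} : Set ℂ) := by
  intro hmem
  have hn0 : n ≠ 0 := by omega
  have : NeZero n := ⟨hn0⟩
  have hα0 : (0 : ℝ) ≤ α := by exact_mod_cast hα.le
  set x : ℝ := (α : ℝ) ^ ((1 : ℝ) / n) with hx
  have hxn : (x : ℂ) ^ n = algebraMap ℚ ℂ α := by
    rw [← Complex.ofReal_pow, hx, one_div, Real.rpow_inv_natCast_pow hα0 hn0]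
    simp
  set d := (minpoly ℚ (x : ℂ)).natDegree
  have hd_pos : 1 ≤ d :=
    minpoly.natDegree_pos (.of_pow (Nat.pos_of_ne_zero hn0) (hxn ▸ isIntegral_algebraMap))
  have hd_le : d ≤ n - 1 := (hζ.natDegree_minpoly_le_totient hmem).trans
    (Nat.le_sub_one_of_lt (Nat.totient_lt n (by omega)))
  refine hirr d hd_pos hd_le ⟨|(minpoly ℚ (x : ℂ)).coeff 0|, ?_⟩
  have hcoeff := norm_algebraMap_coeff_zero_minpoly_of_pow_eq hn0 hxn
  rw [eq_ratCast, Complex.norm_ratCast, Complex.norm_real,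
    Real.norm_of_nonneg (Real.rpow_nonneg hα0 _), ← Real.rpow_mul_natCast hα0,
    one_div_mul_eq_div] at hcoeff
  exact_mod_cast hcoeff
end

section
/- Let n ≥ 3 be an integer and α a positive rational number such that α^(k/n) is irrational for every k with 1 ≤ k ≤ n − 1. Then the Galois group of the Galois extension K = ℚ(α^(1/n), ζ_n) over ℚ is non-abelian. -/
/-! If the Galois group were abelian, complex conjugation (restricted to `K`) would commute with
every automorphism `σ`, so `σ` would send the real root `a = α^(1/n)` of `X^n - α` to a real root,
that is to `±a`. Then `a²` is fixed by the whole group, hence rational, contradicting the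
irrationality of `α^(2/n)`. -/

open Polynomial IntermediateField

section Kummer

variable {F L : Type*} [Field F] [Field L] [Algebra F L]

theorem adjoin_root_primitiveRoot_eq_adjoin_rootSet {n : ℕ} [NeZero n] {ζ a : L}
    (hζ : IsPrimitiveRoot ζ n) {c : F} (ha : a ^ n = algebraMap F L c) (ha₀ : a ≠ 0) :
    adjoin F {a, ζ} = adjoin F ((X ^ n - C c).rootSet L) := by
  have hp : X ^ n - C c ≠ 0 := X_pow_sub_C_ne_zero (Nat.pos_of_neZero n) c
  have mem_rootSet {z : L} : z ∈ (X ^ n - C c).rootSet L ↔ z ^ n = algebraMap F L c := by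
    simp [mem_rootSet, hp, sub_eq_zero]
  apply le_antisymm
  · have ha_mem : a ∈ (X ^ n - C c).rootSet L := mem_rootSet.2 ha
    have hζa_mem : ζ * a ∈ (X ^ n - C c).rootSet L :=
      mem_rootSet.2 (by rw [mul_pow, hζ.pow_eq_one, one_mul, ha])
    rw [adjoin_le_iff, Set.insert_subset_iff, Set.singleton_subset_iff]
    refine ⟨subset_adjoin F _ ha_mem, ?_⟩
    rw [← mul_div_cancel_right₀ ζ ha₀]
    exact div_mem (subset_adjoin F _ hζa_mem) (subset_adjoin F _ ha_mem)
  · rw [adjoin_le_iff]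
    intro z hz
    -- `z / a` is an `n`-th root of unity, so `z = ζ ^ i * a`
    obtain ⟨i, -, hi⟩ := hζ.eq_pow_of_pow_eq_one (ξ := z / a) <| by
      rw [div_pow, mem_rootSet.1 hz, ← ha, div_self (pow_ne_zero n ha₀)]
    rw [← div_mul_cancel₀ z ha₀, ← hi]
    exact mul_mem (pow_mem (subset_adjoin F _ (by simp)) i) (subset_adjoin F _ (by simp))

theorem isSplittingField_adjoin_root_primitiveRoot {n : ℕ} [NeZero n] {ζ a : L}
    (hζ : IsPrimitiveRoot ζ n) {c : F} (ha : a ^ n = algebraMap F L c) (ha₀ : a ≠ 0) :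
    IsSplittingField F (adjoin F {a, ζ}) (X ^ n - C c) := by
  rw [adjoin_root_primitiveRoot_eq_adjoin_rootSet hζ ha ha₀]
  refine adjoin_rootSet_isSplittingField ?_
  simpa using X_pow_sub_C_splits_of_isPrimitiveRoot hζ ha

end Kummer

namespace IntermediateField

noncomputable def conj (K : IntermediateField ℚ ℂ) [Normal ℚ K] : K ≃ₐ[ℚ] K :=
  (Complex.conjAe.restrictScalars ℚ).restrictNormal K

variable {K : IntermediateField ℚ ℂ}

theorem coe_conj_apply [Normal ℚ K] (x : K) : (K.conj x : ℂ) = starRingEnd ℂ x :=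
  AlgEquiv.restrictNormal_commutes _ K x

theorem conj_apply_eq_of_commute [Normal ℚ K] {σ : K ≃ₐ[ℚ] K} (hσ : Commute σ K.conj)
    {x : K} (hx : starRingEnd ℂ x = x) : starRingEnd ℂ (σ x) = σ x := by
  have hx' : K.conj x = x := Subtype.ext (by rw [coe_conj_apply, hx])
  rw [← coe_conj_apply, ← AlgEquiv.mul_apply, ← hσ.eq, AlgEquiv.mul_apply, hx']

theorem sq_mem_bot_of_forall_commute_conj [IsGalois ℚ K] [FiniteDimensional ℚ K]
    (hcentral : ∀ σ : K ≃ₐ[ℚ] K, Commute σ K.conj) {n : ℕ} (hn : n ≠ 0) {a : K}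
    (ha_real : starRingEnd ℂ a = a) (ha : a ^ n ∈ (⊥ : IntermediateField ℚ K)) :
    a ^ 2 ∈ (⊥ : IntermediateField ℚ K) := by
  rw [IsGalois.mem_bot_iff_fixed] at ha ⊢
  intro σ
  obtain ⟨s, hs⟩ := Complex.conj_eq_iff_real.1 ha_real
  obtain ⟨r, hr⟩ := Complex.conj_eq_iff_real.1 (conj_apply_eq_of_commute (hcentral σ) ha_real)
  have hrs : r ^ n = s ^ n := by
    have := congrArg ((↑) : K → ℂ) (ha σ)
    rw [map_pow, SubmonoidClass.coe_pow, SubmonoidClass.coe_pow, hr, hs] at this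
    exact_mod_cast this
  have hrs₂ : r ^ 2 = s ^ 2 := by
    rcases (pow_eq_pow_iff_of_ne_zero hn).1 hrs with rfl | ⟨rfl, -⟩ <;> ring
  apply Subtype.ext
  rw [map_pow, SubmonoidClass.coe_pow, SubmonoidClass.coe_pow, hr, hs]
  exact_mod_cast hrs₂

end IntermediateField

theorem galois_group_nonabelian (n : ℕ) (hn : 3 ≤ n) (α : ℚ) (hα : 0 < α)
    (hirr : ∀ k : ℕ, 1 ≤ k → k ≤ n - 1 → Irrational ((α : ℝ) ^ ((k : ℝ) / (n : ℝ))))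
    (ζ : ℂ) (hζ : IsPrimitiveRoot ζ n)
    (K : IntermediateField ℚ ℂ)
    (hK : K = IntermediateField.adjoin ℚ
      ({(((α : ℝ) ^ ((1 : ℝ) / (n : ℝ)) : ℝ) : ℂ), ζ} : Set ℂ)) :
    ∃ σ τ : K ≃ₐ[ℚ] K, σ * τ ≠ τ * σ := by
  have : NeZero n := ⟨by omega⟩
  have hα₀ : (0 : ℝ) ≤ α := by exact_mod_cast hα.le
  set a : ℝ := (α : ℝ) ^ ((1 : ℝ) / n) with ha
  have ha_pow : a ^ n = α := by
    rw [ha, one_div, Real.rpow_inv_natCast_pow hα₀ (NeZero.ne n)]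
  have ha_sq : a ^ 2 = (α : ℝ) ^ ((2 : ℝ) / n) := by
    rw [ha, ← Real.rpow_natCast, ← Real.rpow_mul hα₀]
    ring_nf
  have ha_pow' : (a : ℂ) ^ n = algebraMap ℚ ℂ α := by
    rw [← Complex.ofReal_pow, ha_pow]; simp
  have ha₀ : (a : ℂ) ≠ 0 := by
    exact_mod_cast (Real.rpow_pos_of_pos (by exact_mod_cast hα) _).ne'
  have : IsSplittingField ℚ K (X ^ n - C α) :=
    hK ▸ isSplittingField_adjoin_root_primitiveRoot hζ ha_pow' ha₀
  have := Normal.of_isSplittingField (E := K) (X ^ n - C α)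
  have := IsSplittingField.finiteDimensional K (X ^ n - C α)
  have : IsGalois ℚ K := ⟨⟩
  by_contra! hcomm
  let aK : K := ⟨a, hK ▸ subset_adjoin ℚ _ (by simp)⟩
  have haK_pow : aK ^ n ∈ (⊥ : IntermediateField ℚ K) := mem_bot.2 ⟨α, Subtype.ext ha_pow'.symm⟩
  obtain ⟨q, hq⟩ := mem_bot.1 <| sq_mem_bot_of_forall_commute_conj (fun σ ↦ hcomm σ _)
    (NeZero.ne n) (Complex.conj_ofReal a) haK_pow
  refine hirr 2 (by omega) (by omega) ⟨q, ?_⟩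
  rw [Nat.cast_ofNat, ← ha_sq]
  have hq' : ((q : ℝ) : ℂ) = ((a ^ 2 : ℝ) : ℂ) := by
    simpa [aK] using congrArg ((↑) : K → ℂ) hq
  exact_mod_cast hq'
end
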